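/- arXiv:2102.05900 — 5 statements merged into one kernel-verified Lean document; each statement's English description precedes it below -/
import Mathlib

section
/- Let v_1,...,v_m ∈ ℝ^d with 1 ≤ d ≤ m, and let 1 < k ≤ d. Then (Π_{1≤i_1<...<i_k≤m} |v_{i_1}∧···∧v_{i_k}|)^(1/(C(m,k)·k)) ≤ (Π_{1≤i_1<...<i_{k-1}≤m} |v_{i_1}∧···∧v_{i_{k-1}}|)^(1/(C(m,k-1)·(k-1))). -/
/-- `pvol v s` is the volume of the parallelotope spanned by the vectors `v i`, `i ∈ s`,
i.e. the square root of the Gram determinant. -/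
noncomputable def pvol {d : ℕ} {ι : Type*} [DecidableEq ι]
    (v : ι → EuclideanSpace ℝ (Fin d)) (s : Finset ι) : ℝ :=
  Real.sqrt (Matrix.det (Matrix.of fun i j : s => (inner ℝ (v i) (v j) : ℝ)))

section aux

open Finset Submodule Matrix InnerProductSpace
open scoped RealInnerProductSpace

variable {E : Type*} [NormedAddCommGroup E] [InnerProductSpace ℝ E]

section generic
variable {ι : Type*} [LinearOrder ι] [LocallyFiniteOrderBot ι] [WellFoundedLT ι]

lemma gs_sub_mem_span (f : ι → E) (i : ι) :
    f i - gramSchmidt ℝ f i ∈ span ℝ (f '' Set.Iio i) := by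
  have h := gramSchmidt_def' ℝ f i
  have : f i - gramSchmidt ℝ f i
      = ∑ j ∈ Finset.Iio i, (span ℝ {gramSchmidt ℝ f j}).starProjection (f i) := by
    nth_rewrite 1 [h]; abel
  rw [this]
  apply Submodule.sum_mem
  intro j hj
  rw [Finset.mem_Iio] at hj
  have h1 : (gramSchmidt ℝ f j) ∈ span ℝ (f '' Set.Iio i) := by
    have := gramSchmidt_mem_span ℝ f (le_refl j)
    refine Submodule.span_mono ?_ this
    exact Set.image_mono fun x hx => lt_of_le_of_lt hx hj
  rw [starProjection_singleton]
  exact Submodule.smul_mem _ _ h1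

lemma gs_orth_span (f : ι → E) (i : ι) {x : E} (hx : x ∈ span ℝ (f '' Set.Iio i)) :
    ⟪gramSchmidt ℝ f i, x⟫ = 0 := by
  rw [← span_gramSchmidt_Iio ℝ f i] at hx
  induction hx using Submodule.span_induction with
  | mem y hy =>
    obtain ⟨j, hj, rfl⟩ := hy
    exact gramSchmidt_orthogonal ℝ f (ne_of_gt hj)
  | zero => exact inner_zero_right _
  | add y z _ _ hy hz => rw [inner_add_right, hy, hz, add_zero]
  | smul c y _ hy => rw [real_inner_smul_right, hy, mul_zero]

lemma gs_norm_le (f : ι → E) (i : ι) {q : E} (hq : q ∈ span ℝ (f '' Set.Iio i)) :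
    ‖gramSchmidt ℝ f i‖ ≤ ‖f i - q‖ := by
  set r := gramSchmidt ℝ f i with hr
  have hdecomp : f i - q = r + ((f i - r) - q) := by abel
  have hmem : (f i - r) - q ∈ span ℝ (f '' Set.Iio i) :=
    Submodule.sub_mem _ (gs_sub_mem_span f i) hq
  have horth : ⟪r, (f i - r) - q⟫ = 0 := gs_orth_span f i hmem
  have : ‖f i - q‖ ^ 2 = ‖r‖ ^ 2 + ‖(f i - r) - q‖ ^ 2 := by
    rw [hdecomp, norm_add_sq_real, horth]; ring
  nlinarith [norm_nonneg r, norm_nonneg (f i - q), norm_nonneg ((f i - r) - q)]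

end generic

noncomputable def gs {E : Type*} [NormedAddCommGroup E] [InnerProductSpace ℝ E] {n : ℕ}
    (f : Fin n → E) : Fin n → E :=
  @gramSchmidt ℝ E _ _ _ (Fin n) _ _ (Finite.to_wellFoundedLT) f

lemma gs_sub_mem_span' {n : ℕ} (f : Fin n → E) (i : Fin n) :
    f i - gs f i ∈ span ℝ (f '' Set.Iio i) :=
  @gs_sub_mem_span E _ _ (Fin n) _ _ (Finite.to_wellFoundedLT) f i

lemma gs_norm_le' {n : ℕ} (f : Fin n → E) (i : Fin n) {q : E}
    (hq : q ∈ span ℝ (f '' Set.Iio i)) : ‖gs f i‖ ≤ ‖f i - q‖ :=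
  @gs_norm_le E _ _ (Fin n) _ _ (Finite.to_wellFoundedLT) f i q hq

/-- Deleting an element of a sequence only increases later Gram–Schmidt norms. -/
lemma gs_norm_succAbove_le {n : ℕ} (w : Fin (n + 1) → E) (p : Fin (n + 1)) (a : Fin n) :
    ‖gs w (p.succAbove a)‖ ≤ ‖gs (w ∘ p.succAbove) a‖ := by
  set u := w ∘ p.succAbove with hu
  have hq : (u a - gs u a) ∈ span ℝ (w '' Set.Iio (p.succAbove a)) := by
    refine Submodule.span_mono ?_ (gs_sub_mem_span' u a)
    rintro x ⟨b, hb, rfl⟩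
    exact ⟨p.succAbove b, Fin.succAbove_lt_succAbove_iff.mpr hb, rfl⟩
  simpa [hu] using gs_norm_le' w (p.succAbove a) hq

lemma gs_def' {n : ℕ} (f : Fin n → E) (i : Fin n) :
    f i = gs f i + ∑ j ∈ Finset.Iio i, (span ℝ {gs f j}).starProjection (f i) :=
  @gramSchmidt_def' ℝ E _ _ _ (Fin n) _ _ (Finite.to_wellFoundedLT) f i

lemma gs_orthogonal {n : ℕ} (f : Fin n → E) {a b : Fin n} (h : a ≠ b) :
    ⟪gs f a, gs f b⟫ = 0 :=
  @gramSchmidt_orthogonal ℝ E _ _ _ (Fin n) _ _ (Finite.to_wellFoundedLT) f a b h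

/-- Gram determinant equals the product of squared Gram–Schmidt norms. -/
lemma det_gram_eq_prod {n : ℕ} (w : Fin n → E) :
    Matrix.det (Matrix.of fun i j : Fin n => ⟪w i, w j⟫) = ∏ i, ‖gs w i‖ ^ 2 := by
  classical
  set g := gs w with hg
  set L : Matrix (Fin n) (Fin n) ℝ :=
    Matrix.of fun a b => if b = a then 1 else if b < a then ⟪g b, w a⟫ / ‖g b‖ ^ 2 else 0 with hL
  have hLdiag : ∀ a, L a a = 1 := fun a => by simp [hL]
  have hLlt : ∀ a b : Fin n, b < a → L a b = ⟪g b, w a⟫ / ‖g b‖ ^ 2 := fun a b h => by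
    simp [hL, ne_of_lt h, h]
  have hLgt : ∀ a b : Fin n, a < b → L a b = 0 := fun a b h => by
    simp [hL, (ne_of_gt h : b ≠ a), not_lt_of_gt h]
  have hw : ∀ a, w a = ∑ b, L a b • g b := by
    intro a
    have h1 : ∑ b, L a b • g b
        = L a a • g a + ∑ b ∈ Finset.univ.erase a, L a b • g b :=
      (Finset.add_sum_erase _ _ (Finset.mem_univ a)).symm
    have h2 : ∑ b ∈ Finset.univ.erase a, L a b • g b = ∑ b ∈ Finset.Iio a, L a b • g b := by
      refine (Finset.sum_subset ?_ ?_).symm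
      · intro b hb
        exact Finset.mem_erase.mpr ⟨ne_of_lt (Finset.mem_Iio.mp hb), Finset.mem_univ b⟩
      · intro b hb hb'
        rw [Finset.mem_Iio] at hb'
        have hab : a < b := lt_of_le_of_ne (not_lt.mp hb') (Finset.mem_erase.mp hb).1.symm
        rw [hLgt a b hab, zero_smul]
    have h3 : ∀ b ∈ Finset.Iio a, L a b • g b
        = (span ℝ {g b}).starProjection (w a) := by
      intro b hb
      rw [Finset.mem_Iio] at hb
      rw [starProjection_singleton, hLlt a b hb]
      norm_num
    rw [h1, h2, Finset.sum_congr rfl h3, hLdiag, one_smul]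
    exact gs_def' w a
  have hgram : (Matrix.of fun i j : Fin n => ⟪w i, w j⟫)
      = L * Matrix.diagonal (fun i => ‖g i‖ ^ 2) * Lᵀ := by
    ext a b
    have : ⟪w a, w b⟫ = ∑ i, ∑ j, L a i * (L b j * ⟪g i, g j⟫) := by
      rw [hw a, hw b, sum_inner]
      refine Finset.sum_congr rfl fun i _ => ?_
      rw [real_inner_smul_left, inner_sum]
      rw [Finset.mul_sum]
      refine Finset.sum_congr rfl fun j _ => ?_
      rw [real_inner_smul_right]
    have h4 : ∀ i : Fin n, ∑ j, L a i * (L b j * ⟪g i, g j⟫)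
        = L a i * ‖g i‖ ^ 2 * L b i := by
      intro i
      rw [Finset.sum_eq_single i]
      · rw [real_inner_self_eq_norm_sq]; ring
      · intro j _ hji
        rw [gs_orthogonal w (Ne.symm hji)]; ring
      · intro h; exact absurd (Finset.mem_univ i) h
    simp only [Matrix.of_apply, this, Finset.sum_congr rfl (fun i _ => h4 i)]
    rw [Matrix.mul_apply]
    refine Finset.sum_congr rfl fun i _ => ?_
    rw [Matrix.mul_diagonal, Matrix.transpose_apply]
  rw [hgram]
  have hLtri : L.BlockTriangular OrderDual.toDual := by
    intro a b h
    exact hLgt a b h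
  have hLttri : (Lᵀ).BlockTriangular id := by
    intro a b h
    exact hLgt b a h
  rw [Matrix.det_mul, Matrix.det_mul]
  rw [Matrix.det_of_lowerTriangular L hLtri, Matrix.det_of_upperTriangular hLttri]
  simp [hLdiag, Matrix.det_diagonal]

lemma pvol_nonneg {d : ℕ} {ι : Type*} [DecidableEq ι]
    (v : ι → EuclideanSpace ℝ (Fin d)) (s : Finset ι) : 0 ≤ pvol v s :=
  Real.sqrt_nonneg _

lemma pvol_eq {d m n : ℕ} (v : Fin m → EuclideanSpace ℝ (Fin d)) (s : Finset (Fin m))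
    (h : s.card = n) :
    pvol v s = ∏ i : Fin n, ‖gs (fun i => v (s.orderIsoOfFin h i)) i‖ := by
  set w : Fin n → EuclideanSpace ℝ (Fin d) := fun i => v (s.orderIsoOfFin h i) with hw
  have hdet : Matrix.det (Matrix.of fun i j : s => (inner ℝ (v i) (v j) : ℝ))
      = Matrix.det (Matrix.of fun i j : Fin n => ⟪w i, w j⟫) := by
    rw [← Matrix.det_submatrix_equiv_self (s.orderIsoOfFin h).toEquiv]
    rfl
  rw [pvol, hdet, det_gram_eq_prod]
  rw [Finset.prod_pow]
  exact Real.sqrt_sq (Finset.prod_nonneg fun i _ => norm_nonneg _)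

lemma orderIso_erase {m n : ℕ} (s : Finset (Fin m)) (h : s.card = n + 1) (p : Fin (n + 1))
    (h' : (s.erase (s.orderIsoOfFin h p)).card = n) (a : Fin n) :
    ((s.erase ↑(s.orderIsoOfFin h p)).orderIsoOfFin h' a : Fin m)
      = s.orderIsoOfFin h (p.succAbove a) := by
  have hsm : StrictMono (fun a : Fin n => (s.orderIsoOfFin h (p.succAbove a) : Fin m)) := by
    intro a b hab
    have h1 : p.succAbove a < p.succAbove b := Fin.succAbove_lt_succAbove_iff.mpr hab
    exact (s.orderIsoOfFin h).strictMono h1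
  have hmem : ∀ a : Fin n, (s.orderIsoOfFin h (p.succAbove a) : Fin m)
      ∈ s.erase (s.orderIsoOfFin h p) := by
    intro a
    refine Finset.mem_erase.mpr ⟨?_, (s.orderIsoOfFin h (p.succAbove a)).2⟩
    intro hcontra
    have : s.orderIsoOfFin h (p.succAbove a) = s.orderIsoOfFin h p := Subtype.ext hcontra
    exact Fin.succAbove_ne p a ((s.orderIsoOfFin h).injective this)
  have := Finset.orderEmbOfFin_unique h' hmem hsm
  rw [Finset.coe_orderIsoOfFin_apply, ← congrFun this a]

/-- Key per-subset inequality: `pvol(s)^(k-1) ≤ ∏_{j ∈ s} pvol(s \ {j})`. -/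
lemma pvol_pow_le_prod_erase {d m n : ℕ} (v : Fin m → EuclideanSpace ℝ (Fin d))
    (s : Finset (Fin m)) (h : s.card = n + 2) :
    pvol v s ^ (n + 1) ≤ ∏ j ∈ s, pvol v (s.erase j) := by
  set σ := s.orderIsoOfFin h with hσ
  set w : Fin (n + 2) → EuclideanSpace ℝ (Fin d) := fun i => v (σ i) with hw
  have hps : pvol v s = ∏ i, ‖gs w i‖ := pvol_eq v s h
  -- rewrite the RHS as a product over `Fin (n+2)`
  have hprod : ∏ j ∈ s, pvol v (s.erase j) = ∏ p : Fin (n + 2), pvol v (s.erase (σ p)) := by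
    rw [← Finset.prod_coe_sort s (fun j => pvol v (s.erase j))]
    exact (Equiv.prod_comp σ.toEquiv (fun j : s => pvol v (s.erase j))).symm
  rw [hprod]
  -- each factor dominates the corresponding product of GS norms
  have hfac : ∀ p : Fin (n + 2),
      ∏ a : Fin (n + 1), ‖gs w (p.succAbove a)‖ ≤ pvol v (s.erase (σ p)) := by
    intro p
    have h' : (s.erase (σ p)).card = n + 1 := by
      rw [Finset.card_erase_of_mem (σ p).2, h]
      rfl
    rw [pvol_eq v _ h']
    have hu : (fun a : Fin (n+1) => v ((s.erase ↑(σ p)).orderIsoOfFin h' a)) = w ∘ p.succAbove := by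
      funext a
      rw [orderIso_erase s h p h' a]
      rfl
    rw [hu]
    exact Finset.prod_le_prod (fun a _ => norm_nonneg _)
      (fun a _ => gs_norm_succAbove_le w p a)
  have hstep : ∏ p : Fin (n + 2), ∏ a : Fin (n + 1), ‖gs w (p.succAbove a)‖
      ≤ ∏ p : Fin (n + 2), pvol v (s.erase (σ p)) :=
    Finset.prod_le_prod (fun p _ => Finset.prod_nonneg fun a _ => norm_nonneg _)
      (fun p _ => hfac p)
  refine le_trans ?_ hstep
  -- now pure algebra of nonneg reals
  set P := ∏ i, ‖gs w i‖ with hP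
  by_cases hP0 : P = 0
  · rw [hps, hP0, zero_pow (Nat.succ_ne_zero n)]
    exact Finset.prod_nonneg fun p _ => Finset.prod_nonneg fun a _ => norm_nonneg _
  · have hne : ∀ i, ‖gs w i‖ ≠ 0 := by
      intro i
      intro hz
      exact hP0 (Finset.prod_eq_zero (Finset.mem_univ i) hz)
    have hone : ∀ p : Fin (n + 2), ∏ a : Fin (n + 1), ‖gs w (p.succAbove a)‖ = P / ‖gs w p‖ := by
      intro p
      rw [hP, Fin.prod_univ_succAbove (fun i => ‖gs w i‖) p]
      rw [mul_comm, mul_div_assoc, div_self (hne p), mul_one]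
    rw [hps]
    calc P ^ (n + 1) = P ^ (n + 2) / P := by
          rw [pow_succ]; field_simp; ring
      _ = ∏ p : Fin (n + 2), (P / ‖gs w p‖) := by
          rw [Finset.prod_div_distrib, Finset.prod_const, hP]
          simp [Finset.card_univ]
      _ = ∏ p : Fin (n + 2), ∏ a : Fin (n + 1), ‖gs w (p.succAbove a)‖ :=
          Finset.prod_congr rfl fun p _ => (hone p).symm
      _ ≤ ∏ p : Fin (n + 2), ∏ a : Fin (n + 1), ‖gs w (p.succAbove a)‖ := le_refl _

lemma double_count {d m n : ℕ} (v : Fin m → EuclideanSpace ℝ (Fin d)) :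
    ∏ s ∈ Finset.powersetCard (n + 2) (Finset.univ : Finset (Fin m)), ∏ j ∈ s, pvol v (s.erase j)
      = ∏ t ∈ Finset.powersetCard (n + 1) (Finset.univ : Finset (Fin m)),
          pvol v t ^ (m - (n + 1)) := by
  classical
  have lhs : ∏ s ∈ Finset.powersetCard (n + 2) (Finset.univ : Finset (Fin m)),
      ∏ j ∈ s, pvol v (s.erase j)
      = ∏ x ∈ (Finset.powersetCard (n + 2) (Finset.univ : Finset (Fin m))).sigma (fun s => s),
          pvol v (x.1.erase x.2) :=
    Finset.prod_sigma' (Finset.powersetCard (n + 2) (Finset.univ : Finset (Fin m)))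
      (fun s => s) (fun s j => pvol v (s.erase j))
  have rhs : ∏ t ∈ Finset.powersetCard (n + 1) (Finset.univ : Finset (Fin m)),
      pvol v t ^ (m - (n + 1))
      = ∏ y ∈ (Finset.powersetCard (n + 1) (Finset.univ : Finset (Fin m))).sigma (fun t => tᶜ),
          pvol v y.1 := by
    rw [← Finset.prod_sigma' (Finset.powersetCard (n + 1) (Finset.univ : Finset (Fin m)))
      (fun t => tᶜ) (fun t _ => pvol v t)]
    refine Finset.prod_congr rfl fun t ht => ?_
    rw [Finset.prod_const, Finset.card_compl, Finset.mem_powersetCard_univ.mp ht]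
    simp
  rw [lhs, rhs]
  refine Finset.prod_bij' (fun x hx => ⟨x.1.erase x.2, x.2⟩) (fun y hy => ⟨insert y.2 y.1, y.2⟩)
    ?_ ?_ ?_ ?_ ?_
  · rintro ⟨s, j⟩ hx
    rw [Finset.mem_sigma] at hx
    obtain ⟨hs, hj⟩ := hx
    rw [Finset.mem_sigma]
    constructor
    · rw [Finset.mem_powersetCard_univ, Finset.card_erase_of_mem hj,
        Finset.mem_powersetCard_univ.mp hs]
      rfl
    · simp
  · rintro ⟨t, j⟩ hy
    rw [Finset.mem_sigma] at hy
    obtain ⟨ht, hj⟩ := hy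
    rw [Finset.mem_compl] at hj
    rw [Finset.mem_sigma]
    constructor
    · rw [Finset.mem_powersetCard_univ, Finset.card_insert_of_notMem hj,
        Finset.mem_powersetCard_univ.mp ht]
    · exact Finset.mem_insert_self _ _
  · rintro ⟨s, j⟩ hx
    rw [Finset.mem_sigma] at hx
    exact Sigma.ext (Finset.insert_erase hx.2) (by simp)
  · rintro ⟨t, j⟩ hy
    rw [Finset.mem_sigma] at hy
    have hj : j ∉ t := Finset.mem_compl.mp hy.2
    exact Sigma.ext (Finset.erase_insert hj) (by simp)
  · rintro ⟨s, j⟩ _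
    rfl


end aux

/-- Vector-valued Maclaurin inequality, endpoint case `p = 0` (geometric means). -/
theorem vector_maclaurin_p_zero (d m : ℕ) (hd : 1 ≤ d) (hdm : d ≤ m)
    (v : Fin m → EuclideanSpace ℝ (Fin d)) (k : ℕ) (hk : 1 < k) (hkd : k ≤ d) :
    (∏ s ∈ Finset.univ.powersetCard k, pvol v s) ^ ((1 : ℝ) / ((m.choose k : ℝ) * k)) ≤
      (∏ s ∈ Finset.univ.powersetCard (k - 1), pvol v s) ^
        ((1 : ℝ) / ((m.choose (k - 1) : ℝ) * ((k - 1 : ℕ) : ℝ))) := by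
  obtain ⟨n, rfl⟩ : ∃ n, k = n + 2 := ⟨k - 2, by omega⟩
  have hk1 : n + 2 - 1 = n + 1 := rfl
  rw [hk1]
  set P2 := ∏ s ∈ Finset.powersetCard (n + 2) (Finset.univ : Finset (Fin m)), pvol v s with hP2
  set P1 := ∏ t ∈ Finset.powersetCard (n + 1) (Finset.univ : Finset (Fin m)), pvol v t with hP1
  have hP2n : 0 ≤ P2 := Finset.prod_nonneg fun s _ => pvol_nonneg v s
  have hP1n : 0 ≤ P1 := Finset.prod_nonneg fun t _ => pvol_nonneg v t
  have hnm : n + 2 ≤ m := le_trans hkd hdm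
  -- main power inequality
  have step : P2 ^ (n + 1) ≤ P1 ^ (m - (n + 1)) := by
    calc P2 ^ (n + 1) = ∏ s ∈ Finset.powersetCard (n + 2) (Finset.univ : Finset (Fin m)),
          pvol v s ^ (n + 1) := (Finset.prod_pow _ _ _).symm
      _ ≤ ∏ s ∈ Finset.powersetCard (n + 2) (Finset.univ : Finset (Fin m)),
          ∏ j ∈ s, pvol v (s.erase j) := by
          refine Finset.prod_le_prod (fun s _ => pow_nonneg (pvol_nonneg v s) _) ?_
          intro s hs
          exact pvol_pow_le_prod_erase v s (Finset.mem_powersetCard_univ.mp hs)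
      _ = ∏ t ∈ Finset.powersetCard (n + 1) (Finset.univ : Finset (Fin m)),
          pvol v t ^ (m - (n + 1)) := double_count v
      _ = P1 ^ (m - (n + 1)) := Finset.prod_pow _ _ _
  -- exponent bookkeeping
  have hc2 : (0 : ℝ) < (m.choose (n + 2) : ℝ) := by
    exact_mod_cast Nat.choose_pos hnm
  have hc1 : (0 : ℝ) < (m.choose (n + 1) : ℝ) := by
    exact_mod_cast Nat.choose_pos (le_trans (Nat.le_succ _) hnm)
  set c : ℝ := (1 : ℝ) / ((m.choose (n + 2) : ℝ) * (n + 2)) / (n + 1) with hc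
  have hcpos : 0 < c := by positivity
  have key : (P2 ^ ((n + 1 : ℕ) : ℝ)) ^ c ≤ (P1 ^ ((m - (n + 1) : ℕ) : ℝ)) ^ c := by
    refine Real.rpow_le_rpow ?_ ?_ hcpos.le
    · exact Real.rpow_nonneg hP2n _
    · rw [Real.rpow_natCast, Real.rpow_natCast]
      exact step
  rw [← Real.rpow_natCast P2 (n + 1), ← Real.rpow_natCast P1 (m - (n + 1))] at step
  have lhs_eq : (P2 ^ ((n + 1 : ℕ) : ℝ)) ^ c = P2 ^ ((1 : ℝ) / ((m.choose (n + 2) : ℝ) * (n + 2))) := by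
    rw [← Real.rpow_mul hP2n]
    congr 1
    rw [hc]
    push_cast
    field_simp
  have choose_id : (m.choose (n + 1) : ℝ) * ((m : ℝ) - (n + 1)) = (m.choose (n + 2) : ℝ) * (n + 2) := by
    have h2 : m.choose (n + 2) * (n + 2) = m.choose (n + 1) * (m - (n + 1)) :=
      Nat.choose_succ_right_eq m (n + 1)
    have hcast := congrArg (Nat.cast : ℕ → ℝ) h2
    push_cast [Nat.cast_sub (le_trans (Nat.le_succ _) hnm)] at hcast
    linarith
  have rhs_eq : (P1 ^ ((m - (n + 1) : ℕ) : ℝ)) ^ c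
      = P1 ^ ((1 : ℝ) / ((m.choose (n + 1) : ℝ) * ((n : ℝ) + 1))) := by
    rw [← Real.rpow_mul hP1n]
    congr 1
    rw [hc]
    rw [Nat.cast_sub (le_trans (Nat.le_succ _) hnm)]
    have hm1 : ((m : ℝ) - (n + 1)) ≠ 0 := by
      have : (n + 1 : ℝ) < m := by exact_mod_cast lt_of_lt_of_le (Nat.lt_succ_self _) hnm
      push_cast
      linarith
    field_simp
    push_cast
    nlinarith [choose_id]
  push_cast
  rw [← lhs_eq, ← rhs_eq]
  exact key
end

section
/- Let M be an n×n symmetric positive semidefinite real matrix and let 1 < k < n. Then (Π_{|A|=k} det(M_A))^(1/C(n-1,k-1)) ≤ (Π_{|B|=k-1} det(M_B))^(1/C(n-1,k-2)), where the products range over all principal k-submatrices and principal (k-1)-submatrices respectively. -/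
set_option linter.unusedSectionVars false
set_option maxHeartbeats 1000000

open Matrix Finset

section SzaszAux

variable {m : Type*} [Fintype m] [DecidableEq m]


lemma psd_smul {c : ℝ} {M : Matrix m m ℝ} (hc : 0 ≤ c) (hM : M.PosSemidef) :
    (c • M).PosSemidef := by
  refine posSemidef_iff_dotProduct_mulVec.mpr ⟨?_, fun x => ?_⟩
  · unfold Matrix.IsHermitian
    rw [conjTranspose_smul, hM.1.eq, star_trivial]
  · rw [smul_mulVec, dotProduct_smul, smul_eq_mul]
    exact mul_nonneg hc (hM.dotProduct_mulVec_nonneg x)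

lemma pd_smul {c : ℝ} {M : Matrix m m ℝ} (hc : 0 < c) (hM : M.PosDef) :
    (c • M).PosDef := by
  refine posDef_iff_dotProduct_mulVec.mpr ⟨?_, fun ⦃x⦄ hx => ?_⟩
  · unfold Matrix.IsHermitian
    rw [conjTranspose_smul, hM.1.eq, star_trivial]
  · rw [smul_mulVec, dotProduct_smul, smul_eq_mul]
    exact mul_pos hc (hM.dotProduct_mulVec_pos hx)

lemma psd_det_nonneg {M : Matrix m m ℝ} (hM : M.PosSemidef) : 0 ≤ M.det := by
  rw [hM.1.det_eq_prod_eigenvalues]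
  exact Finset.prod_nonneg fun i _ => by simpa using hM.eigenvalues_nonneg i

lemma psd_posDef_of_det_ne_zero {M : Matrix m m ℝ} (hM : M.PosSemidef) (h : M.det ≠ 0) :
    M.PosDef := by
  refine posDef_iff_dotProduct_mulVec.mpr ⟨hM.1, fun ⦃x⦄ hx => ?_⟩
  rcases (hM.dotProduct_mulVec_nonneg x).lt_or_eq with h' | h'
  · exact h'
  · exfalso
    have hAx : M *ᵥ x = 0 := (hM.dotProduct_mulVec_zero_iff x).mp h'.symm
    have hinv : M⁻¹ * M = 1 := Matrix.nonsing_inv_mul M (by simpa using h)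
    have : x = 0 := by
      have h2 := congrArg (fun N => N *ᵥ x) hinv
      simp only [← Matrix.mulVec_mulVec, hAx, Matrix.mulVec_zero, Matrix.one_mulVec] at h2
      exact h2.symm
    exact hx this



lemma psd_trace_eq_sum_eigenvalues {M : Matrix m m ℝ} (hM : M.IsHermitian) :
    M.trace = ∑ i, hM.eigenvalues i := by
  conv_lhs => rw [hM.spectral_theorem]
  rw [Unitary.conjStarAlgAut_apply, Matrix.trace_mul_cycle,
    Matrix.mem_unitaryGroup_iff'.mp hM.eigenvectorUnitary.2, Matrix.one_mul,
    Matrix.trace_diagonal]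
  simp

lemma pd_diag_pos {M : Matrix m m ℝ} (hM : M.PosDef) (i : m) : 0 < M i i := by
  have h := hM.dotProduct_mulVec_pos (x := Pi.single i 1) (by
    intro hcon
    have := congrFun hcon i
    simp [Pi.single_eq_same] at this)
  simpa [dotProduct, mulVec, Pi.single_apply, mul_comm] using h

lemma hadamard_pd {M : Matrix m m ℝ} (hM : M.PosDef) : M.det ≤ ∏ i, M i i := by
  cases isEmpty_or_nonempty m with
  | inl h => simp [Matrix.det_isEmpty]
  | inr h =>
  set c := Fintype.card m with hc
  have hc0 : 0 < c := Fintype.card_pos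
  set d : m → ℝ := fun i => Real.sqrt (M i i) with hd
  have hdpos : ∀ i, 0 < d i := fun i => Real.sqrt_pos.mpr (pd_diag_pos hM i)
  set D : Matrix m m ℝ := Matrix.diagonal (fun i => (d i)⁻¹) with hD
  have hDh : Dᴴ = D := by simp [hD, Matrix.diagonal_conjTranspose]
  set N : Matrix m m ℝ := D * M * D with hN
  have hNpsd : N.PosSemidef := by
    have := hM.posSemidef.mul_mul_conjTranspose_same D
    rwa [hDh] at this
  have hNdiag : ∀ i, N i i = 1 := by
    intro i
    have h1 : N i i = (d i)⁻¹ * M i i * (d i)⁻¹ := by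
      simp [hN, hD, Matrix.mul_apply, Matrix.diagonal_apply, Finset.sum_ite_eq,
        Finset.sum_ite_eq']
    have h2 : M i i = d i * d i := (Real.mul_self_sqrt (pd_diag_pos hM i).le).symm
    rw [h1, h2]
    field_simp
    exact div_self (hdpos i).ne'
  have htr : N.trace = (c : ℝ) := by
    rw [Matrix.trace]
    simp only [Matrix.diag]
    rw [Finset.sum_congr rfl (fun i _ => hNdiag i)]
    simp [hc]
  set ev := hNpsd.1.eigenvalues with hev
  have hsum : ∑ i, ev i = (c : ℝ) := by
    rw [hev, ← psd_trace_eq_sum_eigenvalues hNpsd.1, htr]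
  have heignn : ∀ i, 0 ≤ ev i := fun i => hNpsd.eigenvalues_nonneg i
  have hdetN : N.det ≤ 1 := by
    have hamgm := Real.geom_mean_le_arith_mean_weighted Finset.univ
        (fun _ : m => (c : ℝ)⁻¹) ev (fun i _ => by positivity)
        (by
          simp only [Finset.sum_const, nsmul_eq_mul, Finset.card_univ, ← hc]
          exact mul_inv_cancel₀ (by exact_mod_cast hc0.ne'))
        (fun i _ => heignn i)
    have hrhs : (∑ i : m, (c:ℝ)⁻¹ * ev i) = 1 := by
      rw [← Finset.mul_sum, hsum, inv_mul_cancel₀ (by exact_mod_cast hc0.ne')]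
    rw [hrhs] at hamgm
    have hbase : 0 ≤ ∏ i : m, ev i ^ ((c:ℝ)⁻¹) :=
      Finset.prod_nonneg fun i _ => Real.rpow_nonneg (heignn i) _
    have hpow := pow_le_one₀ hbase hamgm (n := c)
    have hexp : (∏ i : m, ev i ^ ((c:ℝ)⁻¹)) ^ c = ∏ i : m, ev i := by
      rw [← Finset.prod_pow]
      refine Finset.prod_congr rfl fun i _ => ?_
      rw [← Real.rpow_natCast (ev i ^ ((c:ℝ)⁻¹)) c, ← Real.rpow_mul (heignn i),
        inv_mul_cancel₀ (by exact_mod_cast hc0.ne'), Real.rpow_one]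
    rw [hexp] at hpow
    calc N.det = ∏ i : m, ev i := by
          rw [hNpsd.1.det_eq_prod_eigenvalues]; norm_num; rfl
      _ ≤ 1 := hpow
  -- relate det M and det N
  set E : Matrix m m ℝ := Matrix.diagonal d with hE
  have hED : E * D = 1 := by
    rw [hE, hD, Matrix.diagonal_mul_diagonal]
    have h3 : (fun i => d i * (d i)⁻¹) = fun _ => (1:ℝ) :=
      funext fun i => mul_inv_cancel₀ (hdpos i).ne'
    rw [h3, Matrix.diagonal_one]
  have hMeq : M = E * N * E := by
    rw [hN]
    calc M = (E * D) * M * (D * E) := by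
          rw [hED]
          rw [hE, hD, Matrix.diagonal_mul_diagonal]
          have : (fun i => (d i)⁻¹ * d i) = fun _ => (1:ℝ) := by
            funext i; exact inv_mul_cancel₀ (hdpos i).ne'
          rw [this, Matrix.diagonal_one, Matrix.one_mul, Matrix.mul_one]
      _ = E * (D * M * D) * E := by noncomm_ring
  have hdetE : E.det = ∏ i, d i := Matrix.det_diagonal
  calc M.det = E.det * N.det * E.det := by rw [hMeq, Matrix.det_mul, Matrix.det_mul]
    _ = N.det * (∏ i, d i) ^ 2 := by rw [hdetE]; ring
    _ ≤ 1 * (∏ i, d i) ^ 2 := by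
        have : (0:ℝ) ≤ (∏ i, d i) ^ 2 := sq_nonneg _
        exact mul_le_mul_of_nonneg_right hdetN this
    _ = ∏ i, M i i := by
        rw [one_mul, ← Finset.prod_pow]
        exact Finset.prod_congr rfl fun i _ => by
          rw [sq]; exact Real.mul_self_sqrt (pd_diag_pos hM i).le



lemma det_single_row {c : ℕ} (B : Matrix (Fin (c+1)) (Fin (c+1)) ℝ)
    (hB : ∀ j, B 0 j = if j = 0 then 1 else 0) :
    B.det = (B.submatrix Fin.succ Fin.succ).det := by
  rw [Matrix.det_succ_row_zero]
  rw [Finset.sum_eq_single 0]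
  · simp [hB, Fin.succAbove_zero]
  · intro j _ hj
    rw [hB]
    simp [hj]
  · simp

lemma adjugate_diag (A : Matrix m m ℝ) (i : m) :
    A.adjugate i i
      = Matrix.det (Matrix.of fun a b : (Finset.univ.erase i : Finset m) => A a b) := by
  have hne : Nonempty m := ⟨i⟩
  set c : ℕ := Fintype.card m - 1 with hcdef
  have hcard : Fintype.card m = c + 1 := by
    have := Fintype.card_pos_iff.mpr hne
    omega
  let e0 : m ≃ Fin (c+1) := Fintype.equivFinOfCardEq hcard
  let e : m ≃ Fin (c+1) := e0.trans (Equiv.swap (e0 i) 0)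
  have hei : e i = 0 := by simp [e, Equiv.swap_apply_left]
  set B : Matrix (Fin (c+1)) (Fin (c+1)) ℝ := A.submatrix e.symm e.symm with hBdef
  have h1 : A.adjugate i i = B.adjugate 0 0 := by
    rw [hBdef, Matrix.adjugate_submatrix_equiv_self]
    simp [← hei]
  set C : Matrix (Fin (c+1)) (Fin (c+1)) ℝ := B.updateRow 0 (Pi.single 0 1) with hCdef
  have h2 : B.adjugate 0 0 = C.det := Matrix.adjugate_apply B 0 0
  have h3 : C.det = (B.submatrix Fin.succ Fin.succ).det := by
    rw [det_single_row C (fun j => by simp [hCdef, Matrix.updateRow_self, Pi.single_apply])]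
    congr 1
  -- now identify with the subtype determinant
  have h4 : (B.submatrix Fin.succ Fin.succ).det
      = Matrix.det (Matrix.of fun a b : (Finset.univ.erase i : Finset m) => A a b) := by
    have hmem : ∀ a : Fin c, e.symm a.succ ∈ Finset.univ.erase i := by
      intro a
      rw [Finset.mem_erase]
      refine ⟨fun hcon => ?_, Finset.mem_univ _⟩
      have h5 := congrArg e hcon
      rw [Equiv.apply_symm_apply, hei] at h5
      exact Fin.succ_ne_zero a h5
    let φ : Fin c ≃ (Finset.univ.erase i : Finset m) :=
      { toFun := fun a => ⟨e.symm a.succ, hmem a⟩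
        invFun := fun x => Fin.pred (e x) (by
          have hx : (x : m) ≠ i := (Finset.mem_erase.mp x.2).1
          intro hcon
          exact hx (e.injective (by rw [hcon, hei])))
        left_inv := fun a => by simp
        right_inv := fun x => by
          ext
          simp }
    rw [← Matrix.det_submatrix_equiv_self φ (Matrix.of fun a b : (Finset.univ.erase i : Finset m) => A a b)]
    congr 1
  rw [h1, h2, h3, h4]

lemma minor_det_nonneg {M : Matrix m m ℝ} (hM : M.PosSemidef) (t : Finset m) :
    0 ≤ Matrix.det (Matrix.of fun a b : t => M a b) :=
  psd_det_nonneg (hM.submatrix (fun x : t => (x : m)))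

lemma szasz_step {M : Matrix m m ℝ} (hM : M.PosSemidef) (hc : 2 ≤ Fintype.card m) :
    M.det ^ (Fintype.card m - 1)
      ≤ ∏ i : m, Matrix.det (Matrix.of fun a b : (Finset.univ.erase i : Finset m) => M a b) := by
  by_cases hdet : M.det = 0
  · rw [hdet, zero_pow (by omega)]
    exact Finset.prod_nonneg fun i _ => minor_det_nonneg hM _
  · have hpd : M.PosDef := psd_posDef_of_det_ne_zero hM hdet
    have hdetpos : 0 < M.det := hpd.det_pos
    have hadj : M.adjugate = M.det • M⁻¹ := by
      rw [Matrix.inv_def, smul_smul, Ring.inverse_eq_inv, mul_inv_cancel₀ hdet, one_smul]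
    have hadjpd : M.adjugate.PosDef := by
      rw [hadj]; exact pd_smul hdetpos hpd.inv
    have h := hadamard_pd hadjpd
    rw [Matrix.det_adjugate] at h
    calc M.det ^ (Fintype.card m - 1) ≤ ∏ i, M.adjugate i i := h
      _ = _ := Finset.prod_congr rfl fun i _ => adjugate_diag M i

end SzaszAux

/-- Szasz's inequality for products of principal minors of a positive semidefinite matrix. -/
theorem szasz_inequality (n : ℕ) (M : Matrix (Fin n) (Fin n) ℝ) (hM : M.PosSemidef)
    (k : ℕ) (hk : 1 < k) (hkn : k < n) :
    (∏ s ∈ (Finset.univ.powersetCard k : Finset (Finset (Fin n))),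
        Matrix.det (Matrix.of fun i j : s => M i j)) ^ ((1 : ℝ) / ((n - 1).choose (k - 1) : ℝ)) ≤
      (∏ s ∈ (Finset.univ.powersetCard (k - 1) : Finset (Finset (Fin n))),
        Matrix.det (Matrix.of fun i j : s => M i j)) ^ ((1 : ℝ) / ((n - 1).choose (k - 2) : ℝ)) := by
  classical
  set f : Finset (Fin n) → ℝ := fun t => Matrix.det (Matrix.of fun a b : t => M a b) with hf
  have hfnn : ∀ t, 0 ≤ f t := fun t => psd_det_nonneg (hM.submatrix (fun x : t => (x : Fin n)))
  -- step 1 : per-subset inequality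
  have hstep : ∀ s ∈ (Finset.univ.powersetCard k : Finset (Finset (Fin n))),
      f s ^ (k - 1) ≤ ∏ a ∈ s, f (s.erase a) := by
    intro s hs
    have hcard : s.card = k := (Finset.mem_powersetCard_univ.mp hs)
    have hcard' : Fintype.card ↥s = k := by rw [Fintype.card_coe, hcard]
    set N : Matrix ↥s ↥s ℝ := Matrix.of fun i j : s => M i j with hN
    have hNpsd : N.PosSemidef := hM.submatrix (fun x : s => (x : Fin n))
    have h1 := szasz_step hNpsd (by omega)
    rw [hcard'] at h1
    have h2 : ∀ i : ↥s,
        Matrix.det (Matrix.of fun a b : (Finset.univ.erase i : Finset ↥s) => N a b)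
          = f (s.erase ↑i) := by
      intro i
      have hmem : ∀ x : (Finset.univ.erase i : Finset ↥s), (x : ↥s).1 ∈ s.erase ↑i := by
        intro x
        rcases Finset.mem_erase.mp x.2 with ⟨hx1, _⟩
        exact Finset.mem_erase.mpr ⟨fun hcon => hx1 (Subtype.ext hcon), (x : ↥s).2⟩
      let ψ : (Finset.univ.erase i : Finset ↥s) ≃ (s.erase ↑i : Finset (Fin n)) :=
        { toFun := fun x => ⟨(x : ↥s).1, hmem x⟩
          invFun := fun y => ⟨⟨(y : Fin n), Finset.mem_of_mem_erase y.2⟩, by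
            refine Finset.mem_erase.mpr ⟨fun hcon => ?_, Finset.mem_univ _⟩
            exact (Finset.mem_erase.mp y.2).1 (congrArg Subtype.val hcon)⟩
          left_inv := fun x => by ext; rfl
          right_inv := fun y => by ext; rfl }
      rw [hf]
      rw [← Matrix.det_submatrix_equiv_self ψ.symm
        (Matrix.of fun a b : (Finset.univ.erase i : Finset ↥s) => N a b)]
      congr 1
    calc f s ^ (k-1) = N.det ^ (k-1) := rfl
      _ ≤ ∏ i : ↥s, Matrix.det (Matrix.of fun a b : (Finset.univ.erase i : Finset ↥s) => N a b) := h1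
      _ = ∏ i : ↥s, f (s.erase ↑i) := Finset.prod_congr rfl fun i _ => h2 i
      _ = ∏ a ∈ s, f (s.erase a) := Finset.prod_coe_sort s (fun a => f (s.erase a))
  -- step 2 : multiply over all s and double count
  have hprod : (∏ s ∈ (Finset.univ.powersetCard k : Finset (Finset (Fin n))), f s) ^ (k-1)
      ≤ (∏ t ∈ (Finset.univ.powersetCard (k-1) : Finset (Finset (Fin n))), f t) ^ (n - (k-1)) := by
    rw [← Finset.prod_pow]
    refine le_trans (Finset.prod_le_prod (fun s _ => pow_nonneg (hfnn s) _) hstep) (le_of_eq ?_)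
    calc ∏ s ∈ (Finset.univ.powersetCard k : Finset (Finset (Fin n))), ∏ a ∈ s, f (s.erase a)
        = ∏ p ∈ (Finset.univ.powersetCard k : Finset (Finset (Fin n))).sigma (fun s => s),
            f (p.1.erase p.2) := Finset.prod_sigma' _ _ _
      _ = ∏ q ∈ (Finset.univ.powersetCard (k-1) : Finset (Finset (Fin n))).sigma (fun t => tᶜ),
            f q.1 := by
          refine Finset.prod_nbij' (fun p => ⟨p.1.erase p.2, p.2⟩)
            (fun q => ⟨insert q.2 q.1, q.2⟩) ?_ ?_ ?_ ?_ ?_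
          · rintro ⟨s, a⟩ hp
            rw [Finset.mem_sigma] at hp ⊢
            obtain ⟨hs, ha⟩ := hp
            refine ⟨Finset.mem_powersetCard_univ.mpr ?_,
              Finset.mem_compl.mpr (Finset.notMem_erase _ _)⟩
            rw [Finset.card_erase_of_mem ha, Finset.mem_powersetCard_univ.mp hs]
          · rintro ⟨t, a⟩ hq
            rw [Finset.mem_sigma] at hq ⊢
            obtain ⟨ht, ha⟩ := hq
            rw [Finset.mem_compl] at ha
            refine ⟨Finset.mem_powersetCard_univ.mpr ?_, Finset.mem_insert_self _ _⟩
            rw [Finset.card_insert_of_notMem ha, Finset.mem_powersetCard_univ.mp ht]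
            omega
          · rintro ⟨s, a⟩ hp
            rw [Finset.mem_sigma] at hp
            exact Sigma.ext (by simp [Finset.insert_erase hp.2]) (by simp)
          · rintro ⟨t, a⟩ hq
            rw [Finset.mem_sigma] at hq
            rw [Finset.mem_compl] at hq
            exact Sigma.ext (by simp [Finset.erase_insert hq.2]) (by simp)
          · rintro ⟨s, a⟩ _; rfl
      _ = ∏ t ∈ (Finset.univ.powersetCard (k-1) : Finset (Finset (Fin n))), ∏ _a ∈ tᶜ, f t :=
          (Finset.prod_sigma' _ _ (fun t _ => f t)).symm
      _ = ∏ t ∈ (Finset.univ.powersetCard (k-1) : Finset (Finset (Fin n))), f t ^ (n - (k-1)) := by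
          refine Finset.prod_congr rfl fun t ht => ?_
          rw [Finset.prod_const, Finset.card_compl, Fintype.card_fin,
            Finset.mem_powersetCard_univ.mp ht]
      _ = (∏ t ∈ (Finset.univ.powersetCard (k-1) : Finset (Finset (Fin n))), f t) ^ (n - (k-1)) :=
          Finset.prod_pow _ _ _
  -- step 3 : take real powers
  set X := ∏ s ∈ (Finset.univ.powersetCard k : Finset (Finset (Fin n))), f s with hX
  set Y := ∏ s ∈ (Finset.univ.powersetCard (k-1) : Finset (Finset (Fin n))), f s with hY
  have hXnn : 0 ≤ X := Finset.prod_nonneg fun s _ => hfnn s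
  have hYnn : 0 ≤ Y := Finset.prod_nonneg fun s _ => hfnn s
  have hA : (0:ℝ) < ((n-1).choose (k-1) : ℝ) := by
    exact_mod_cast Nat.choose_pos (by omega)
  have hB : (0:ℝ) < ((n-1).choose (k-2) : ℝ) := by
    exact_mod_cast Nat.choose_pos (by omega)
  have hk1 : (0:ℝ) < ((k-1 : ℕ) : ℝ) := by
    exact_mod_cast Nat.sub_pos_of_lt hk
  have hnk1 : (0:ℝ) < ((n-(k-1) : ℕ) : ℝ) := by
    have : 0 < n - (k-1) := by omega
    exact_mod_cast this
  have hid : ((n-1).choose (k-1) : ℝ) * ((k-1:ℕ):ℝ) = ((n-1).choose (k-2) : ℝ) * ((n-(k-1):ℕ):ℝ) := by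
    have hnat : (n-1).choose (k-1) * (k-1) = (n-1).choose (k-2) * (n-(k-1)) := by
      have h1 : k - 1 = (k-2) + 1 := by omega
      have h2 : (n-1) - (k-2) = n - (k-1) := by omega
      rw [h1, Nat.choose_succ_right_eq, h2, ← h1]
    exact_mod_cast hnat
  set ε : ℝ := (((k-1:ℕ):ℝ) * ((n-1).choose (k-1) : ℝ))⁻¹ with hε
  have hεnn : 0 ≤ ε := by positivity
  have h1 : X ^ ((1:ℝ) / ((n-1).choose (k-1) : ℝ)) = (X ^ (k-1 : ℕ)) ^ ε := by
    rw [← Real.rpow_natCast X (k-1), ← Real.rpow_mul hXnn]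
    congr 1
    rw [hε]
    field_simp
  have h2 : Y ^ ((1:ℝ) / ((n-1).choose (k-2) : ℝ)) = (Y ^ (n-(k-1) : ℕ)) ^ ε := by
    rw [← Real.rpow_natCast Y (n-(k-1)), ← Real.rpow_mul hYnn]
    congr 1
    rw [hε, eq_comm, mul_inv_eq_iff_eq_mul₀ (mul_pos hk1 hA).ne', div_mul_eq_mul_div, one_mul,
      eq_div_iff hB.ne']
    linear_combination -hid
  rw [h1, h2]
  exact Real.rpow_le_rpow (pow_nonneg hXnn _) hprod hεnn
end

section
/- For any vectors v_1,...,v_k ∈ ℝ^d spanning a k-dimensional space (1 < k ≤ d), |v_1∧···∧v_k| ≤ (Π_{j=1}^k |v_1∧···∧v̂_j∧···∧v_k|)^(1/(k-1)), where v̂_j means the vector v_j is omitted from the wedge product. -/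
open Matrix Finset Submodule

noncomputable section
variable {d : ℕ}

def gram {n : ℕ} (w : Fin n → EuclideanSpace ℝ (Fin d)) : Matrix (Fin n) (Fin n) ℝ :=
  Matrix.of fun i j => inner ℝ (w i) (w j)

lemma gram_conj {n : ℕ} (w : Fin n → EuclideanSpace ℝ (Fin d))
    (M : Matrix (Fin n) (Fin n) ℝ) :
    gram (fun i => ∑ j, M i j • w j) = M * gram w * Mᵀ := by
  ext i j
  simp only [_root_.gram, Matrix.of_apply, Matrix.mul_apply, Matrix.transpose_apply,
    sum_inner, inner_sum, real_inner_smul_left, real_inner_smul_right,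
    Finset.mul_sum, Finset.sum_mul]
  exact Finset.sum_congr rfl fun b _ => Finset.sum_congr rfl fun a _ => by ring

/-- Core step: Gram determinant factors through the last vector. -/

lemma gram_det_snoc {n : ℕ} (w : Fin (n + 1) → EuclideanSpace ℝ (Fin d)) :
    (gram w).det = (gram (w ∘ Fin.castSucc)).det *
      ‖w (Fin.last n) - (orthogonalProjection
          (span ℝ (Set.range (w ∘ Fin.castSucc))) (w (Fin.last n)) : EuclideanSpace ℝ (Fin d))‖ ^ 2 := by
  set K : Submodule ℝ (EuclideanSpace ℝ (Fin d)) := span ℝ (Set.range (w ∘ Fin.castSucc)) with hK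
  set p : EuclideanSpace ℝ (Fin d) := (orthogonalProjection K (w (Fin.last n)) : EuclideanSpace ℝ (Fin d)) with hp
  set q : EuclideanSpace ℝ (Fin d) := w (Fin.last n) - p with hq
  have hpK : p ∈ K := (orthogonalProjection K (w (Fin.last n))).2
  obtain ⟨x, hx⟩ := (mem_span_range_iff_exists_fun ℝ).mp hpK
  have hqperp : ∀ y ∈ K, (inner ℝ y q : ℝ) = 0 := by
    intro y hy
    exact (Submodule.mem_orthogonal K q).mp
      (Submodule.sub_starProjection_mem_orthogonal (K := K) (w (Fin.last n))) y hy
  set M : Matrix (Fin (n+1)) (Fin (n+1)) ℝ :=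
    Matrix.of fun i j => if i = Fin.last n then (Fin.snoc (fun a => -x a) 1 : Fin (n+1) → ℝ) j
      else if j = i then 1 else 0 with hM
  have hMdet : M.det = 1 := by
    rw [Matrix.det_of_lowerTriangular M]
    · apply Finset.prod_eq_one
      intro i _
      by_cases h : i = Fin.last n
      · subst h; simp [hM, Fin.snoc_last]
      · simp [hM, h]
    · intro i j hij
      simp only [OrderDual.toDual_lt_toDual] at hij
      have hi : i ≠ Fin.last n := by
        intro h; subst h; exact absurd hij (by simp [Fin.le_last, not_lt, Fin.le_def, Fin.is_le])
      simp [hM, hi, (Fin.ne_of_lt hij).symm]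
  have hw' : (fun i => ∑ j, M i j • w j) = Fin.snoc (w ∘ Fin.castSucc) q := by
    funext i
    refine Fin.lastCases ?_ ?_ i
    · rw [Fin.snoc_last, hq]
      have : ∀ j, M (Fin.last n) j = (Fin.snoc (fun a => -x a) 1 : Fin (n+1) → ℝ) j := by intro j; simp [hM]
      simp only [this]
      rw [Fin.sum_univ_castSucc]
      simp only [Fin.snoc_castSucc, Fin.snoc_last, one_smul, neg_smul]
      rw [Finset.sum_neg_distrib]
      simp only [Function.comp_apply] at hx
      rw [← hx]
      abel
    · intro a
      have ha : (a.castSucc : Fin (n+1)) ≠ Fin.last n := (Fin.castSucc_lt_last a).ne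
      have : ∀ j, M a.castSucc j = if j = a.castSucc then 1 else 0 := by
        intro j; simp [hM, ha]
      simp only [this, ite_smul, one_smul, zero_smul]
      rw [Finset.sum_ite_eq' univ a.castSucc]
      simp [Fin.snoc_castSucc]
  have hdet1 : (gram (Fin.snoc (w ∘ Fin.castSucc) q : Fin (n+1) → EuclideanSpace ℝ (Fin d))).det
      = (gram w).det := by
    rw [← hw', gram_conj, Matrix.det_mul, Matrix.det_mul, Matrix.det_transpose, hMdet]
    ring
  rw [← hdet1]
  -- now expand along last column
  rw [Matrix.det_succ_column _ (Fin.last n)]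
  rw [Finset.sum_eq_single (Fin.last n)]
  · have h1 : (gram (Fin.snoc (w ∘ Fin.castSucc) q : Fin (n+1) → _)) (Fin.last n) (Fin.last n)
        = ‖q‖ ^ 2 := by
      simp only [_root_.gram, Matrix.of_apply, Fin.snoc_last]
      exact real_inner_self_eq_norm_sq q
    have h2 : ((gram (Fin.snoc (w ∘ Fin.castSucc) q : Fin (n+1) → _)).submatrix
        (Fin.last n).succAbove (Fin.last n).succAbove) = gram (w ∘ Fin.castSucc) := by
      ext a b
      simp [_root_.gram, Fin.succAbove_last, Fin.snoc_castSucc]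
    rw [h1, h2]
    have : (-1 : ℝ) ^ ((Fin.last n : ℕ) + (Fin.last n : ℕ)) = 1 :=
      Even.neg_one_pow ⟨n, rfl⟩
    rw [this]
    ring
  · intro i _ hi
    have : (gram (Fin.snoc (w ∘ Fin.castSucc) q : Fin (n+1) → _)) i (Fin.last n) = 0 := by
      obtain ⟨a, rfl⟩ := Fin.exists_castSucc_eq.mpr hi
      have : w (Fin.castSucc a) ∈ K := subset_span ⟨a, rfl⟩
      simpa [_root_.gram, Fin.snoc_castSucc, Fin.snoc_last] using hqperp _ this
    rw [this]; ring
  · simp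

def pdist {n : ℕ} (w : Fin n → EuclideanSpace ℝ (Fin d)) (j : Fin n) : ℝ :=
  ‖w j - (orthogonalProjection (span ℝ (w '' ({j}ᶜ))) (w j) : EuclideanSpace ℝ (Fin d))‖

lemma dist_proj_mono (K₁ K₂ : Submodule ℝ (EuclideanSpace ℝ (Fin d))) (h : K₁ ≤ K₂)
    (x : EuclideanSpace ℝ (Fin d)) :
    ‖x - (orthogonalProjection K₂ x : EuclideanSpace ℝ (Fin d))‖ ≤
      ‖x - (orthogonalProjection K₁ x : EuclideanSpace ℝ (Fin d))‖ := by
  rw [← Submodule.starProjection_apply, Submodule.starProjection_minimal]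
  have hb : BddBelow (Set.range fun z : K₂ => ‖x - (z : EuclideanSpace ℝ (Fin d))‖) := by
    refine ⟨0, ?_⟩
    rintro b ⟨z, rfl⟩
    exact norm_nonneg _
  exact ciInf_le hb (⟨(orthogonalProjection K₁ x : EuclideanSpace ℝ (Fin d)),
    h (orthogonalProjection K₁ x).2⟩ : K₂)

lemma range_comp_castSucc {n : ℕ} {α : Type*} (w : Fin (n + 1) → α)
    (σ : Equiv.Perm (Fin (n + 1))) :
    Set.range (w ∘ σ ∘ Fin.castSucc) = w '' ({σ (Fin.last n)}ᶜ) := by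
  ext y
  constructor
  · rintro ⟨a, rfl⟩
    exact ⟨σ a.castSucc, by simp [σ.injective.ne (Fin.castSucc_lt_last a).ne], rfl⟩
  · rintro ⟨i, hi, rfl⟩
    simp only [Set.mem_compl_iff, Set.mem_singleton_iff] at hi
    have h2 : σ.symm i ≠ Fin.last n := by
      intro h
      apply hi
      rw [← σ.apply_symm_apply i, h]
    obtain ⟨a, ha⟩ := Fin.exists_castSucc_eq.mpr h2
    exact ⟨a, by simp [ha]⟩

lemma range_castSucc_eq {n : ℕ} {α : Type*} (w : Fin (n + 1) → α) :
    Set.range (w ∘ Fin.castSucc) = w '' ({Fin.last n}ᶜ) := by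
  have := range_comp_castSucc w (Equiv.refl _)
  simpa using this

lemma pdist_last {n : ℕ} (w : Fin (n + 1) → EuclideanSpace ℝ (Fin d)) :
    (gram w).det = (gram (w ∘ Fin.castSucc)).det * pdist w (Fin.last n) ^ 2 := by
  rw [gram_det_snoc w, pdist,
    range_castSucc_eq w]

lemma prod_pdist_sq_le {n : ℕ} (w : Fin n → EuclideanSpace ℝ (Fin d)) :
    ∏ j, pdist w j ^ 2 ≤ (gram w).det := by
  induction n with
  | zero => simp [Matrix.det_fin_zero]
  | succ n ih =>
    rw [pdist_last w, Fin.prod_univ_castSucc]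
    have hterm : ∀ a : Fin n, pdist w a.castSucc ≤ pdist (w ∘ Fin.castSucc) a := by
      intro a
      have hsub : span ℝ ((w ∘ Fin.castSucc) '' ({a}ᶜ)) ≤ span ℝ (w '' ({a.castSucc}ᶜ)) := by
        apply span_mono
        rintro y ⟨b, hb, rfl⟩
        simp only [Set.mem_compl_iff, Set.mem_singleton_iff] at hb
        exact ⟨b.castSucc, by simp [Fin.castSucc_inj, hb], rfl⟩
      exact dist_proj_mono _ _ hsub (w a.castSucc)
    have h1 : ∏ a : Fin n, pdist w a.castSucc ^ 2 ≤ ∏ a : Fin n, pdist (w ∘ Fin.castSucc) a ^ 2 := by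
      apply Finset.prod_le_prod
      · intro a _; positivity
      · intro a _
        exact pow_le_pow_left₀ (norm_nonneg _) (hterm a) 2
    exact mul_le_mul_of_nonneg_right (h1.trans (ih _)) (sq_nonneg _)

lemma pdist_pos {n : ℕ} {w : Fin n → EuclideanSpace ℝ (Fin d)}
    (hli : LinearIndependent ℝ w) (j : Fin n) : 0 < pdist w j := by
  rw [pdist, norm_pos_iff]
  intro h
  rw [sub_eq_zero] at h
  have : w j ∈ span ℝ (w '' ({j}ᶜ)) := by
    rw [h]; exact (orthogonalProjection _ _).2
  exact hli.notMem_span_image (by simp) this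

lemma gram_det_erase {n : ℕ} (w : Fin (n + 1) → EuclideanSpace ℝ (Fin d)) (j : Fin (n + 1)) :
    (gram w).det =
      (gram (w ∘ (Equiv.swap j (Fin.last n)) ∘ Fin.castSucc)).det * pdist w j ^ 2 := by
  set σ := Equiv.swap j (Fin.last n) with hσ
  have h1 : (gram (w ∘ σ)).det = (gram w).det := by
    have h : gram (w ∘ σ) = (gram w).submatrix σ σ := rfl
    rw [h, Matrix.det_submatrix_equiv_self]
  have h2 := pdist_last (w ∘ σ)
  rw [h1] at h2
  rw [h2]
  congr 2
  rw [pdist, pdist]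
  have hlast : (w ∘ σ) (Fin.last n) = w j := by simp [hσ, Equiv.swap_apply_right]
  have hsets : (w ∘ σ) '' ({Fin.last n}ᶜ) = w '' ({j}ᶜ) := by
    rw [← range_castSucc_eq (w ∘ σ)]
    have h3 := range_comp_castSucc w σ
    rw [show (w ∘ ⇑σ) ∘ Fin.castSucc = w ∘ ⇑σ ∘ Fin.castSucc from rfl, h3, hσ,
      Equiv.swap_apply_right]
  rw [hlast]
  have key : ∀ A B : Submodule ℝ (EuclideanSpace ℝ (Fin d)), A = B →
      ∀ [A.HasOrthogonalProjection] [B.HasOrthogonalProjection],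
      ‖w j - (A.orthogonalProjection (w j) : EuclideanSpace ℝ (Fin d))‖ =
        ‖w j - (B.orthogonalProjection (w j) : EuclideanSpace ℝ (Fin d))‖ := by
    rintro A B rfl _ _; rfl
  exact key _ _ (congrArg (span ℝ) hsets)

lemma pvol_eq_sqrt {k m : ℕ} (v : Fin k → EuclideanSpace ℝ (Fin d)) (s : Finset (Fin k))
    (e : Fin m ≃ {x // x ∈ s}) :
    pvol v s = Real.sqrt (gram (fun a => v (e a).1)).det := by
  rw [pvol]
  congr 1
  rw [← Matrix.det_submatrix_equiv_self e (Matrix.of fun i j : s => (inner ℝ (v i) (v j) : ℝ))]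
  rfl

def eraseEquiv {n : ℕ} (j : Fin (n + 1)) : Fin n ≃ {x // x ∈ Finset.univ.erase j} :=
  Equiv.ofBijective
    (fun a => ⟨Equiv.swap j (Fin.last n) a.castSucc, Finset.mem_erase.mpr
      ⟨fun h => (Fin.castSucc_lt_last a).ne
        ((Equiv.swap j (Fin.last n)).injective
          (h.trans (Equiv.swap_apply_right j (Fin.last n)).symm)),
        Finset.mem_univ _⟩⟩)
    ((Fintype.bijective_iff_injective_and_card _).mpr
      ⟨fun a b hab => by
        have := (Equiv.swap j (Fin.last n)).injective (congrArg Subtype.val hab)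
        exact Fin.castSucc_injective n this,
       by simp [Fintype.card_coe, Finset.card_erase_of_mem]⟩)

/-- Szasz-type inequality for parallelotope volumes: the volume of a parallelotope is bounded by
the geometric mean of the volumes of its facets (one generating vector omitted). -/
theorem vol_le_prod_facet_vols (d k : ℕ) (hk : 1 < k) (hkd : k ≤ d)
    (v : Fin k → EuclideanSpace ℝ (Fin d)) (hli : LinearIndependent ℝ v) :
    pvol v Finset.univ ≤
      (∏ j, pvol v (Finset.univ.erase j)) ^ ((1 : ℝ) / ((k - 1 : ℕ) : ℝ)) := by
  obtain ⟨n, rfl⟩ : ∃ n, k = n + 1 := ⟨k - 1, by omega⟩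
  have hn : 1 ≤ n := by omega
  set P := (gram v).det with hPdef
  set Q : Fin (n + 1) → ℝ :=
    fun j => (gram (v ∘ (Equiv.swap j (Fin.last n)) ∘ Fin.castSucc)).det with hQdef
  have hPQ : ∀ j, P = Q j * pdist v j ^ 2 := fun j => gram_det_erase v j
  have hDpos : ∀ j : Fin (n + 1), 0 < pdist v j := fun j => pdist_pos hli j
  have hDP : ∏ j, pdist v j ^ 2 ≤ P := prod_pdist_sq_le v
  have hPpos : 0 < P :=
    lt_of_lt_of_le (Finset.prod_pos fun j _ => pow_pos (hDpos j) 2) hDP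
  have hQpos : ∀ j, 0 < Q j := by
    intro j
    rcases lt_or_ge 0 (Q j) with h | h
    · exact h
    · exfalso; nlinarith [hPpos, hPQ j, sq_nonneg (pdist v j)]
  have key : P ^ n ≤ ∏ j, Q j := by
    have h1 : P ^ (n + 1) = (∏ j, Q j) * ∏ j, pdist v j ^ 2 := by
      calc P ^ (n + 1) = ∏ _j : Fin (n + 1), P := by
            rw [Finset.prod_const, Finset.card_univ, Fintype.card_fin]
        _ = ∏ j, (Q j * pdist v j ^ 2) := Finset.prod_congr rfl fun j _ => hPQ j
        _ = (∏ j, Q j) * ∏ j, pdist v j ^ 2 := Finset.prod_mul_distrib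
    have h2 : P ^ n * P ≤ (∏ j, Q j) * P := by
      rw [← pow_succ, h1]
      exact mul_le_mul_of_nonneg_left hDP (Finset.prod_nonneg fun j _ => (hQpos j).le)
    exact le_of_mul_le_mul_right h2 hPpos
  have hu : pvol v Finset.univ = Real.sqrt P := by
    rw [pvol_eq_sqrt v Finset.univ (Equiv.subtypeUnivEquiv (fun x => Finset.mem_univ x)).symm]
    rfl
  have he : ∀ j, pvol v (Finset.univ.erase j) = Real.sqrt (Q j) := fun j =>
    pvol_eq_sqrt v _ (eraseEquiv j)
  rw [hu, Finset.prod_congr rfl fun j _ => he j]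
  have hprod : ∏ j, Real.sqrt (Q j) = Real.sqrt (∏ j, Q j) := by
    simp_rw [Real.sqrt_eq_rpow]
    exact Real.finset_prod_rpow _ _ (fun j _ => (hQpos j).le) _
  rw [hprod, Real.sqrt_eq_rpow, Real.sqrt_eq_rpow]
  have hcast : ((n + 1 - 1 : ℕ) : ℝ) = (n : ℝ) := by norm_num
  rw [hcast]
  have hQprodpos : 0 < ∏ j, Q j := Finset.prod_pos fun j _ => hQpos j
  rw [← Real.rpow_natCast P n] at key
  have step : (P ^ (n : ℝ)) ^ ((1 : ℝ) / (2 * n)) ≤ (∏ j, Q j) ^ ((1 : ℝ) / (2 * n)) :=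
    Real.rpow_le_rpow (Real.rpow_nonneg hPpos.le _) key (by positivity)
  rw [← Real.rpow_mul hPpos.le] at step
  have e1 : (n : ℝ) * ((1 : ℝ) / (2 * n)) = (1 : ℝ) / 2 := by
    have : (n : ℝ) ≠ 0 := by positivity
    field_simp
  rw [e1] at step
  rw [← Real.rpow_mul hQprodpos.le]
  have e2 : (1 : ℝ) / 2 * (1 / (n : ℝ)) = (1 : ℝ) / (2 * n) := by ring
  rw [e2]
  exact step

end
end

section
/- For any v_1, v_2, v_3, v_4 ∈ ℝ^4, |v_1∧v_2∧v_3|‖v_4‖ + |v_1∧v_2∧v_4|‖v_3‖ + |v_1∧v_3∧v_4|‖v_2‖ ≤ |v_2∧v_3||v_1∧v_4| + |v_2∧v_4||v_1∧v_3| + |v_3∧v_4||v_1∧v_2|. -/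
set_option maxHeartbeats 1000000
lemma det_pair (g : Fin 4 → Fin 4 → ℝ) (a b : Fin 4) (hab : a ≠ b) :
    Matrix.det (Matrix.of fun i j : ({a, b} : Finset (Fin 4)) => g i j)
      = g a a * g b b - g a b * g b a := by
  have ha : a ∈ ({a,b} : Finset (Fin 4)) := by simp
  have hb : b ∈ ({a,b} : Finset (Fin 4)) := by simp
  let e : Fin 2 ≃ ({a,b} : Finset (Fin 4)) :=
    { toFun := ![⟨a, ha⟩, ⟨b, hb⟩]
      invFun := fun x => if x.1 = a then 0 else 1
      left_inv := by
        intro i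
        fin_cases i
        · simp
        · simp [hab.symm]
      right_inv := by
        rintro ⟨x, hx⟩
        simp only [Finset.mem_insert, Finset.mem_singleton] at hx
        rcases hx with rfl | rfl
        · simp
        · simp [hab.symm] }
  rw [← Matrix.det_submatrix_equiv_self e, Matrix.det_fin_two]
  simp [e, Matrix.submatrix]


lemma det_triple (g : Fin 4 → Fin 4 → ℝ) (a b c : Fin 4)
    (hab : a ≠ b) (hac : a ≠ c) (hbc : b ≠ c) :
    Matrix.det (Matrix.of fun i j : ({a, b, c} : Finset (Fin 4)) => g i j)
      = g a a * (g b b * g c c - g b c * g c b)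
        - g a b * (g b a * g c c - g b c * g c a)
        + g a c * (g b a * g c b - g b b * g c a) := by
  have ha : a ∈ ({a,b,c} : Finset (Fin 4)) := by simp
  have hb : b ∈ ({a,b,c} : Finset (Fin 4)) := by simp
  have hc : c ∈ ({a,b,c} : Finset (Fin 4)) := by simp
  let e : Fin 3 ≃ ({a,b,c} : Finset (Fin 4)) :=
    { toFun := ![⟨a, ha⟩, ⟨b, hb⟩, ⟨c, hc⟩]
      invFun := fun x => if x.1 = a then 0 else if x.1 = b then 1 else 2
      left_inv := by
        intro i
        fin_cases i
        · simp
        · simp [hab.symm]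
        · simp [hac.symm, hbc.symm]
      right_inv := by
        rintro ⟨x, hx⟩
        simp only [Finset.mem_insert, Finset.mem_singleton] at hx
        rcases hx with rfl | rfl | rfl
        · simp
        · simp [hab.symm]
        · simp [hac.symm, hbc.symm] }
  rw [← Matrix.det_submatrix_equiv_self e, Matrix.det_fin_three]
  simp [e, Matrix.submatrix]
  ring


lemma pvol_pair (v : Fin 4 → EuclideanSpace ℝ (Fin 4)) (a b : Fin 4) (hab : a ≠ b) :
    pvol v {a, b} = Real.sqrt ((inner ℝ (v a) (v a) : ℝ) * (inner ℝ (v b) (v b) : ℝ)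
      - (inner ℝ (v a) (v b) : ℝ)^2) := by
  unfold pvol
  rw [det_pair (fun i j => (inner ℝ (v i) (v j) : ℝ)) a b hab]
  rw [real_inner_comm (v b) (v a)]
  ring_nf

lemma pvol_triple (v : Fin 4 → EuclideanSpace ℝ (Fin 4)) (a b c : Fin 4)
    (hab : a ≠ b) (hac : a ≠ c) (hbc : b ≠ c) :
    pvol v {a, b, c} = Real.sqrt (
      (inner ℝ (v a) (v a) : ℝ) * ((inner ℝ (v b) (v b) : ℝ) * (inner ℝ (v c) (v c) : ℝ)
          - (inner ℝ (v b) (v c) : ℝ)^2)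
      - (inner ℝ (v a) (v b) : ℝ) * ((inner ℝ (v a) (v b) : ℝ) * (inner ℝ (v c) (v c) : ℝ)
          - (inner ℝ (v b) (v c) : ℝ) * (inner ℝ (v a) (v c) : ℝ))
      + (inner ℝ (v a) (v c) : ℝ) * ((inner ℝ (v a) (v b) : ℝ) * (inner ℝ (v b) (v c) : ℝ)
          - (inner ℝ (v b) (v b) : ℝ) * (inner ℝ (v a) (v c) : ℝ))) := by
  unfold pvol
  rw [det_triple (fun i j => (inner ℝ (v i) (v j) : ℝ)) a b c hab hac hbc]
  rw [real_inner_comm (v b) (v a), real_inner_comm (v c) (v a), real_inner_comm (v c) (v b)]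
  ring_nf

open RealInnerProductSpace in
lemma gram3_nonneg {E : Type*} [NormedAddCommGroup E] [InnerProductSpace ℝ E] (x y z : E) :
    0 ≤ ‖x‖^2*‖y‖^2*‖z‖^2 + 2*⟪x,y⟫*⟪x,z⟫*⟪y,z⟫
      - ‖x‖^2*⟪y,z⟫^2 - ‖y‖^2*⟪x,z⟫^2 - ‖z‖^2*⟪x,y⟫^2 := by
  by_cases hx : x = 0
  · simp [hx]
  · set n : ℝ := ‖x‖^2 with hn
    have hn0 : (0:ℝ) < n := by
      have := norm_pos_iff.mpr hx
      positivity
    set p : ℝ := ⟪x,y⟫ with hp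
    set q : ℝ := ⟪x,z⟫ with hq
    set y' : E := y - (p/n) • x with hy'
    set z' : E := z - (q/n) • x with hz'
    have hxx : ⟪x,x⟫ = n := real_inner_self_eq_norm_sq x
    have hyx : ⟪y,x⟫ = p := real_inner_comm x y
    have hzx : ⟪z,x⟫ = q := real_inner_comm x z
    have h1 : ‖y'‖^2 = ‖y‖^2 - p^2/n := by
      rw [hy', @norm_sub_sq_real, real_inner_smul_right, norm_smul, hyx]
      rw [mul_pow, Real.norm_eq_abs, sq_abs]
      field_simp [hn]
      ring
    have h2 : ‖z'‖^2 = ‖z‖^2 - q^2/n := by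
      rw [hz', @norm_sub_sq_real, real_inner_smul_right, norm_smul, hzx]
      rw [mul_pow, Real.norm_eq_abs, sq_abs]
      field_simp [hn]
      ring
    have h3 : ⟪y',z'⟫ = ⟪y,z⟫ - p*q/n := by
      rw [hy', hz']
      simp only [inner_sub_left, inner_sub_right, real_inner_smul_left,
        real_inner_smul_right, hxx, hzx, hyx, ← hp, ← hq]
      field_simp
      ring
    have cauchy : ⟪y',z'⟫^2 ≤ ‖y'‖^2 * ‖z'‖^2 := by
      have := real_inner_mul_inner_self_le y' z'
      rw [real_inner_self_eq_norm_sq, real_inner_self_eq_norm_sq] at this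
      nlinarith [this]
    have key : ‖x‖^2*‖y‖^2*‖z‖^2 + 2*⟪x,y⟫*⟪x,z⟫*⟪y,z⟫
      - ‖x‖^2*⟪y,z⟫^2 - ‖y‖^2*⟪x,z⟫^2 - ‖z‖^2*⟪x,y⟫^2
        = n * (‖y'‖^2 * ‖z'‖^2 - ⟪y',z'⟫^2) := by
      rw [h1, h2, h3, ← hn, ← hp, ← hq]
      field_simp
      ring
    rw [key]
    nlinarith [cauchy, hn0.le]

lemma keyB_lemma (ai aj c ri rj Ri Rj A B : ℝ)
    (hri : 0 ≤ ri) (hRi : 0 ≤ Ri) (hA : 0 ≤ A) (hB : 0 ≤ B)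
    (hAsq : A^2 = ri^2*rj^2 - c^2)
    (hBsq : B^2 = Ri^2*Rj^2 - (ai*aj+c)^2)
    (hRisq : Ri^2 = ai^2 + ri^2) (hRjsq : Rj^2 = aj^2 + rj^2) :
    A*Ri ≤ B*ri := by
  apply le_of_pow_le_pow_left₀ two_ne_zero (mul_nonneg hB hri)
  have h1 : (A*Ri)^2 = (ri^2*rj^2 - c^2)*(ai^2 + ri^2) := by
    rw [mul_pow, hAsq, hRisq]
  have h2 : (B*ri)^2 = ((ai^2+ri^2)*(aj^2+rj^2) - (ai*aj+c)^2)*ri^2 := by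
    rw [mul_pow, hBsq, hRisq, hRjsq]
  rw [h1, h2]
  nlinarith [sq_nonneg (aj*ri^2 - ai*c)]

lemma keyZ_lemma (a1 a3 r2 r3 c23 A23 R1 R3 B13 : ℝ)
    (hA23 : 0 ≤ A23) (hR1 : 0 ≤ R1) (hB13 : 0 ≤ B13) (hr2 : 0 ≤ r2)
    (hA23sq : A23^2 = r2^2*r3^2 - c23^2)
    (hR1sq : R1^2 = a1^2)
    (hR3sq : R3^2 = a3^2 + r3^2)
    (hB13sq : B13^2 = R1^2*R3^2 - (a1*a3)^2) :
    A23*R1 ≤ B13*r2 := by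
  apply le_of_pow_le_pow_left₀ two_ne_zero (mul_nonneg hB13 hr2)
  have h1 : (A23*R1)^2 = (r2^2*r3^2 - c23^2)*a1^2 := by rw [mul_pow, hA23sq, hR1sq]
  have h2 : (B13*r2)^2 = (a1^2*(a3^2+r3^2) - (a1*a3)^2)*r2^2 := by
    rw [mul_pow, hB13sq, hR1sq, hR3sq]
  rw [h1, h2]
  nlinarith [sq_nonneg (c23*a1)]

lemma tri_abs (r1 r2 r3 c12 c13 c23 A23 A13 A12 : ℝ)
    (hr2 : 0 ≤ r2) (hr3 : 0 ≤ r3)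
    (hc23 : c23^2 ≤ r2^2*r3^2)
    (hD : 0 ≤ r1^2*r2^2*r3^2 + 2*c12*c13*c23 - r1^2*c23^2 - r2^2*c13^2 - r3^2*c12^2)
    (hA23 : 0 ≤ A23) (hA13 : 0 ≤ A13) (hA12 : 0 ≤ A12)
    (hA23sq : A23^2 = r2^2*r3^2 - c23^2)
    (hA13sq : A13^2 = r1^2*r3^2 - c13^2)
    (hA12sq : A12^2 = r1^2*r2^2 - c12^2)
    (hr1 : 0 ≤ r1) :
    A23*r1 ≤ A13*r2 + A12*r3 := by
  have hK : |c12*c13 - r1^2*c23| ≤ A13*A12 := by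
    have h1 : |c12*c13 - r1^2*c23|^2 ≤ (A13*A12)^2 := by
      rw [sq_abs]; nlinarith [hD, sq_nonneg r1]
    exact le_of_pow_le_pow_left₀ two_ne_zero (mul_nonneg hA13 hA12) h1
  have h23 : |c23| ≤ r2*r3 := by
    have h1 : |c23|^2 ≤ (r2*r3)^2 := by rw [sq_abs]; nlinarith
    exact le_of_pow_le_pow_left₀ two_ne_zero (mul_nonneg hr2 hr3) h1
  have key : (A23*r1)^2 ≤ (A13*r2 + A12*r3)^2 := by
    have hm : |c23| * |c12*c13 - r1^2*c23| ≤ (r2*r3) * (A13*A12) :=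
      mul_le_mul h23 hK (abs_nonneg _) (mul_nonneg hr2 hr3)
    have hle : c23 * (c12*c13 - r1^2*c23) ≤ |c23| * |c12*c13 - r1^2*c23| := by
      rw [← abs_mul]; exact le_abs_self _
    nlinarith [hD, hm, hle]
  exact le_of_pow_le_pow_left₀ two_ne_zero (by positivity) key

lemma sorted_core (A23 A13 A12 B23 B13 B12 r1 r2 r3 R1 R2 R3 : ℝ)
    (hA23 : 0 ≤ A23) (hA13 : 0 ≤ A13) (hA12 : 0 ≤ A12)
    (hr1 : 0 < r1) (hr2 : 0 < r2) (hr3 : 0 < r3)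
    (hB23 : A23*R2 ≤ B23*r2) (hB13 : A13*R1 ≤ B13*r1) (hB12 : A12*R1 ≤ B12*r1)
    (tri : A23*r1 ≤ A13*r2 + A12*r3)
    (o12 : R2*r1 ≤ R1*r2) (o13 : R3*r1 ≤ R1*r3) (o23 : R3*r2 ≤ R2*r3) :
    A23*R1 + A13*R2 + A12*R3 ≤ B23*r1 + B13*r2 + B12*r3 := by
  have hmul : (A23*R1 + A13*R2 + A12*R3) * (r1*r2) ≤ (B23*r1 + B13*r2 + B12*r3) * (r1*r2) := by
    have b1 : A23*R2*r1^2 ≤ B23*r2*r1^2 :=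
      mul_le_mul_of_nonneg_right hB23 (sq_nonneg r1)
    have b2 : A13*R1*r2^2 ≤ B13*r1*r2^2 :=
      mul_le_mul_of_nonneg_right hB13 (sq_nonneg r2)
    have b3 : A12*R1*(r2*r3) ≤ B12*r1*(r2*r3) :=
      mul_le_mul_of_nonneg_right hB12 (by positivity)
    rcases le_total (A23*r1) (A13*r2) with hc | hc
    · have d1 : A23*r1*(R1*r2 - R2*r1) ≤ A13*r2*(R1*r2 - R2*r1) :=
        mul_le_mul_of_nonneg_right hc (by linarith)
      have d2 : 0 ≤ A12*(r2*(R1*r3 - R3*r1)) :=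
        mul_nonneg hA12 (mul_nonneg hr2.le (by linarith))
      nlinarith [d1, d2, b1, b2, b3]
    · have htri : A23*r1 - A13*r2 ≤ A12*r3 := by linarith
      have d1 : (A23*r1 - A13*r2)*(R1*r2 - R2*r1) ≤ A12*r3*(R1*r2 - R2*r1) :=
        mul_le_mul_of_nonneg_right htri (by linarith)
      have d2 : A12*(r3*(R1*r2 - R2*r1)) ≤ A12*(r2*(R1*r3 - R3*r1)) := by
        apply mul_le_mul_of_nonneg_left _ hA12
        nlinarith [o23, hr1.le]
      nlinarith [d1, d2, b1, b2, b3]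
  exact le_of_mul_le_mul_right hmul (by positivity)

lemma Rpos_lemma (a r R : ℝ) (hr : 0 < r) (hR : 0 ≤ R) (hsq : R^2 = a^2 + r^2) : 0 < R := by
  nlinarith [sq_nonneg a, mul_pos hr hr]

lemma ord_trans (ra rb rm Ra Rb Rm : ℝ) (hra : 0 ≤ ra) (hrb : 0 ≤ rb)
    (hrm : 0 < rm) (hRm : 0 < Rm)
    (o1 : Ra*rm ≤ Rm*ra) (o2 : Rm*rb ≤ Rb*rm) : Ra*rb ≤ Rb*ra := by
  have h := mul_le_mul o1 o2 (mul_nonneg hRm.le hrb) (mul_nonneg hRm.le hra)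
  have h2 : (Ra*rb)*(rm*Rm) ≤ (Rb*ra)*(rm*Rm) := by nlinarith [h]
  exact le_of_mul_le_mul_right h2 (by positivity)

lemma core_ineq (a1 a2 a3 r1 r2 r3 c12 c13 c23 R1 R2 R3 A23 A13 A12 B23 B13 B12 : ℝ)
    (hr1 : 0 ≤ r1) (hr2 : 0 ≤ r2) (hr3 : 0 ≤ r3)
    (hc12 : c12^2 ≤ r1^2*r2^2) (hc13 : c13^2 ≤ r1^2*r3^2) (hc23 : c23^2 ≤ r2^2*r3^2)
    (hD : 0 ≤ r1^2*r2^2*r3^2 + 2*c12*c13*c23 - r1^2*c23^2 - r2^2*c13^2 - r3^2*c12^2)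
    (hR1 : 0 ≤ R1) (hR2 : 0 ≤ R2) (hR3 : 0 ≤ R3)
    (hR1sq : R1^2 = a1^2 + r1^2) (hR2sq : R2^2 = a2^2 + r2^2) (hR3sq : R3^2 = a3^2 + r3^2)
    (hA23 : 0 ≤ A23) (hA13 : 0 ≤ A13) (hA12 : 0 ≤ A12)
    (hA23sq : A23^2 = r2^2*r3^2 - c23^2)
    (hA13sq : A13^2 = r1^2*r3^2 - c13^2)
    (hA12sq : A12^2 = r1^2*r2^2 - c12^2)
    (hB23 : 0 ≤ B23) (hB13 : 0 ≤ B13) (hB12 : 0 ≤ B12)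
    (hB23sq : B23^2 = R2^2*R3^2 - (a2*a3+c23)^2)
    (hB13sq : B13^2 = R1^2*R3^2 - (a1*a3+c13)^2)
    (hB12sq : B12^2 = R1^2*R2^2 - (a1*a2+c12)^2) :
    A23*R1 + A13*R2 + A12*R3 ≤ B23*r1 + B13*r2 + B12*r3 := by
  rcases eq_or_lt_of_le hr1 with h1 | h1
  · -- r1 = 0
    have hr1' : r1 = 0 := h1.symm
    subst hr1'
    have hc12' : c12 = 0 := by
      have : c12^2 = 0 := le_antisymm (by linarith) (sq_nonneg c12)
      exact pow_eq_zero_iff two_ne_zero |>.mp this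
    have hc13' : c13 = 0 := by
      have : c13^2 = 0 := le_antisymm (by linarith) (sq_nonneg c13)
      exact pow_eq_zero_iff two_ne_zero |>.mp this
    have hA12' : A12 = 0 := by
      have : A12^2 = 0 := by rw [hA12sq, hc12']; ring
      exact pow_eq_zero_iff two_ne_zero |>.mp this
    have hA13' : A13 = 0 := by
      have : A13^2 = 0 := by rw [hA13sq, hc13']; ring
      exact pow_eq_zero_iff two_ne_zero |>.mp this
    subst hA12' hA13'
    have key : A23*R1 ≤ B13*r2 :=
      keyZ_lemma a1 a3 r2 r3 c23 A23 R1 R3 B13 hA23 hR1 hB13 hr2 hA23sq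
        (by linear_combination hR1sq) hR3sq (by linear_combination hB13sq - (2*a1*a3 + c13)*hc13')
    have h2 := mul_nonneg hB12 hr3
    have h3 := mul_nonneg hB23 hr2
    linarith [key]
  rcases eq_or_lt_of_le hr2 with h2 | h2
  · -- r2 = 0
    have hr2' : r2 = 0 := h2.symm
    subst hr2'
    have hc12' : c12 = 0 := by
      have : c12^2 = 0 := le_antisymm (by nlinarith [hc12]) (sq_nonneg c12)
      exact pow_eq_zero_iff two_ne_zero |>.mp this
    have hc23' : c23 = 0 := by
      have : c23^2 = 0 := le_antisymm (by nlinarith [hc23]) (sq_nonneg c23)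
      exact pow_eq_zero_iff two_ne_zero |>.mp this
    have hA12' : A12 = 0 := by
      have : A12^2 = 0 := by rw [hA12sq, hc12']; ring
      exact pow_eq_zero_iff two_ne_zero |>.mp this
    have hA23' : A23 = 0 := by
      have : A23^2 = 0 := by rw [hA23sq, hc23']; ring
      exact pow_eq_zero_iff two_ne_zero |>.mp this
    subst hA12' hA23'
    have key : A13*R2 ≤ B12*r3 :=
      keyZ_lemma a2 a1 r3 r1 c13 A13 R2 R1 B12 hA13 hR2 hB12 hr3
        (by linear_combination hA13sq)
        (by linear_combination hR2sq) hR1sq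
        (by linear_combination hB12sq - (2*a1*a2 + c12)*hc12')
    have hh2 := mul_nonneg hB13 hr2
    have hh3 := mul_nonneg hB23 hr1
    linarith [key]
  rcases eq_or_lt_of_le hr3 with h3 | h3
  · -- r3 = 0
    have hr3' : r3 = 0 := h3.symm
    subst hr3'
    have hc13' : c13 = 0 := by
      have : c13^2 = 0 := le_antisymm (by nlinarith [hc13]) (sq_nonneg c13)
      exact pow_eq_zero_iff two_ne_zero |>.mp this
    have hc23' : c23 = 0 := by
      have : c23^2 = 0 := le_antisymm (by nlinarith [hc23]) (sq_nonneg c23)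
      exact pow_eq_zero_iff two_ne_zero |>.mp this
    have hA13' : A13 = 0 := by
      have : A13^2 = 0 := by rw [hA13sq, hc13']; ring
      exact pow_eq_zero_iff two_ne_zero |>.mp this
    have hA23' : A23 = 0 := by
      have : A23^2 = 0 := by rw [hA23sq, hc23']; ring
      exact pow_eq_zero_iff two_ne_zero |>.mp this
    subst hA13' hA23'
    have key : A12*R3 ≤ B13*r2 :=
      keyZ_lemma a3 a1 r2 r1 c12 A12 R3 R1 B13 hA12 hR3 hB13 hr2
        (by linear_combination hA12sq)
        (by linear_combination hR3sq) hR1sq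
        (by linear_combination hB13sq - (2*a1*a3 + c13)*hc13')
    have hh2 := mul_nonneg hB12 hr3
    have hh3 := mul_nonneg hB23 hr1
    linarith [key]
  -- positive case
  have hR1p : 0 < R1 := Rpos_lemma a1 r1 R1 h1 hR1 hR1sq
  have hR2p : 0 < R2 := Rpos_lemma a2 r2 R2 h2 hR2 hR2sq
  have hR3p : 0 < R3 := Rpos_lemma a3 r3 R3 h3 hR3 hR3sq
  have k23_2 : A23*R2 ≤ B23*r2 :=
    keyB_lemma a2 a3 c23 r2 r3 R2 R3 A23 B23 hr2 hR2 hA23 hB23 hA23sq hB23sq hR2sq hR3sq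
  have k23_3 : A23*R3 ≤ B23*r3 :=
    keyB_lemma a3 a2 c23 r3 r2 R3 R2 A23 B23 hr3 hR3 hA23 hB23
      (by linear_combination hA23sq) (by linear_combination hB23sq) hR3sq hR2sq
  have k13_1 : A13*R1 ≤ B13*r1 :=
    keyB_lemma a1 a3 c13 r1 r3 R1 R3 A13 B13 hr1 hR1 hA13 hB13 hA13sq hB13sq hR1sq hR3sq
  have k13_3 : A13*R3 ≤ B13*r3 :=
    keyB_lemma a3 a1 c13 r3 r1 R3 R1 A13 B13 hr3 hR3 hA13 hB13
      (by linear_combination hA13sq) (by linear_combination hB13sq) hR3sq hR1sq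
  have k12_1 : A12*R1 ≤ B12*r1 :=
    keyB_lemma a1 a2 c12 r1 r2 R1 R2 A12 B12 hr1 hR1 hA12 hB12 hA12sq hB12sq hR1sq hR2sq
  have k12_2 : A12*R2 ≤ B12*r2 :=
    keyB_lemma a2 a1 c12 r2 r1 R2 R1 A12 B12 hr2 hR2 hA12 hB12
      (by linear_combination hA12sq) (by linear_combination hB12sq) hR2sq hR1sq
  have tri1 : A23*r1 ≤ A13*r2 + A12*r3 :=
    tri_abs r1 r2 r3 c12 c13 c23 A23 A13 A12 hr2 hr3 hc23 hD hA23 hA13 hA12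
      hA23sq hA13sq hA12sq hr1
  have tri2 : A13*r2 ≤ A23*r1 + A12*r3 := by
    have h := tri_abs r2 r1 r3 c12 c23 c13 A13 A23 A12 hr1 hr3
      (by linarith [hc13]) (by linarith [hD]) hA13 hA23 hA12
      (by linear_combination hA13sq) (by linear_combination hA23sq)
      (by linear_combination hA12sq) hr2
    linarith [h]
  have tri3 : A12*r3 ≤ A23*r1 + A13*r2 := by
    have h := tri_abs r3 r2 r1 c23 c13 c12 A12 A13 A23 hr2 hr1
      (by linarith [hc12]) (by linarith [hD]) hA12 hA13 hA23
      (by linear_combination hA12sq) (by linear_combination hA13sq)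
      (by linear_combination hA23sq) hr3
    linarith [h]
  rcases le_total (R2*r1) (R1*r2) with o12 | o12 <;>
    rcases le_total (R3*r1) (R1*r3) with o13 | o13 <;>
      rcases le_total (R3*r2) (R2*r3) with o23 | o23
  · -- LLL: t3≤t2≤t1 : order (1,2,3)
    linarith [sorted_core A23 A13 A12 B23 B13 B12 r1 r2 r3 R1 R2 R3
      hA23 hA13 hA12 h1 h2 h3 k23_2 k13_1 k12_1 tri1 o12 o13 o23]
  · -- LLR: t2≤t1, t3≤t1, t2≤t3 : order (1,3,2)
    linarith [sorted_core A23 A12 A13 B23 B12 B13 r1 r3 r2 R1 R3 R2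
      hA23 hA12 hA13 h1 h3 h2 k23_3 k12_1 k13_1 (by linarith [tri1]) o13 o12 o23]
  · -- LRL: cyclic t2≤t1≤t3≤t2 : order (1,2,3), derive t3≤t1
    have o13' : R3*r1 ≤ R1*r3 :=
      ord_trans r3 r1 r2 R3 R1 R2 hr3 hr1 h2 hR2p o23 o12
    linarith [sorted_core A23 A13 A12 B23 B13 B12 r1 r2 r3 R1 R2 R3
      hA23 hA13 hA12 h1 h2 h3 k23_2 k13_1 k12_1 tri1 o12 o13' o23]
  · -- LRR: t2≤t1, t1≤t3, t2≤t3 : order (3,1,2)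
    linarith [sorted_core A12 A23 A13 B12 B23 B13 r3 r1 r2 R3 R1 R2
      hA12 hA23 hA13 h3 h1 h2 k12_1 k23_3 k13_3 tri3 o13 o23 o12]
  · -- RLL: t1≤t2, t3≤t1, t3≤t2 : order (2,1,3)
    linarith [sorted_core A13 A23 A12 B13 B23 B12 r2 r1 r3 R2 R1 R3
      hA13 hA23 hA12 h2 h1 h3 k13_1 k23_2 k12_2 tri2 o12 o23 o13]
  · -- RLR: cyclic t1≤t2≤t3≤t1 : order (2,1,3), derive t3≤t2
    have o23' : R3*r2 ≤ R2*r3 :=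
      ord_trans r3 r2 r1 R3 R2 R1 hr3 hr2 h1 hR1p o13 o12
    linarith [sorted_core A13 A23 A12 B13 B23 B12 r2 r1 r3 R2 R1 R3
      hA13 hA23 hA12 h2 h1 h3 k13_1 k23_2 k12_2 tri2 o12 o23' o13]
  · -- RRL: t1≤t2, t1≤t3, t3≤t2 : order (2,3,1)
    linarith [sorted_core A13 A12 A23 B13 B12 B23 r2 r3 r1 R2 R3 R1
      hA13 hA12 hA23 h2 h3 h1 k13_3 k12_2 k23_2 (by linarith [tri2]) o23 o12 o13]
  · -- RRR: t1≤t2≤t3 : order (3,2,1)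
    linarith [sorted_core A12 A13 A23 B12 B13 B23 r3 r2 r1 R3 R2 R1
      hA12 hA13 hA23 h3 h2 h1 k12_2 k13_3 k23_3 (by linarith [tri3]) o23 o13 o12]

lemma Bsq_inner_nonneg (a1 a2 r1 r2 c : ℝ) (hr1 : 0 ≤ r1) (hr2 : 0 ≤ r2)
    (hc : c^2 ≤ r1^2*r2^2) :
    0 ≤ (a1^2+r1^2)*(a2^2+r2^2) - (a1*a2+c)^2 := by
  have habs : |c| ≤ r1*r2 := by
    refine le_of_pow_le_pow_left₀ two_ne_zero (mul_nonneg hr1 hr2) ?_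
    rw [sq_abs]; nlinarith [hc]
  have h1 : 0 ≤ r1*r2 - c := by have := abs_le.mp habs; obtain ⟨u, w⟩ := this; linarith
  have h2 : 0 ≤ r1*r2 + c := by have := abs_le.mp habs; obtain ⟨u, w⟩ := this; linarith
  rcases le_total 0 (a1*a2) with hs | hs
  · nlinarith [sq_nonneg (a1*r2 - a2*r1), mul_nonneg hs h1, mul_nonneg h1 h2]
  · nlinarith [sq_nonneg (a1*r2 + a2*r1), mul_nonneg (neg_nonneg.mpr hs) h2, mul_nonneg h1 h2]

/-- The four-vector (`d = 4`) instance of the reduction inequality for `k = 3`, `p = 1`. -/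
theorem four_vector_reduction (v : Fin 4 → EuclideanSpace ℝ (Fin 4)) :
    pvol v {0, 1, 2} * ‖v 3‖ + pvol v {0, 1, 3} * ‖v 2‖ + pvol v {0, 2, 3} * ‖v 1‖ ≤
      pvol v {1, 2} * pvol v {0, 3} + pvol v {1, 3} * pvol v {0, 2} +
        pvol v {2, 3} * pvol v {0, 1} := by
  by_cases h0 : v 0 = 0
  · have e1 : pvol v {0,1,2} = 0 := by
      rw [pvol_triple v 0 1 2 (by decide) (by decide) (by decide)]
      simp [h0]
    have e2 : pvol v {0,1,3} = 0 := by
      rw [pvol_triple v 0 1 3 (by decide) (by decide) (by decide)]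
      simp [h0]
    have e3 : pvol v {0,2,3} = 0 := by
      rw [pvol_triple v 0 2 3 (by decide) (by decide) (by decide)]
      simp [h0]
    rw [e1, e2, e3]
    have q1 : 0 ≤ pvol v {1,2} * pvol v {0,3} := by unfold pvol; positivity
    have q2 : 0 ≤ pvol v {1,3} * pvol v {0,2} := by unfold pvol; positivity
    have q3 : 0 ≤ pvol v {2,3} * pvol v {0,1} := by unfold pvol; positivity
    linarith
  · have hN : (0:ℝ) < ‖v 0‖ := norm_pos_iff.mpr h0
    set N : ℝ := ‖v 0‖ with hNdef
    have hNne : N ≠ 0 := hN.ne'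
    set a1 : ℝ := (inner ℝ (v 0) (v 1) : ℝ) / N with ha1
    set a2 : ℝ := (inner ℝ (v 0) (v 2) : ℝ) / N with ha2
    set a3 : ℝ := (inner ℝ (v 0) (v 3) : ℝ) / N with ha3
    set w1 : EuclideanSpace ℝ (Fin 4) := v 1 - (a1 / N) • v 0 with hw1
    set w2 : EuclideanSpace ℝ (Fin 4) := v 2 - (a2 / N) • v 0 with hw2
    set w3 : EuclideanSpace ℝ (Fin 4) := v 3 - (a3 / N) • v 0 with hw3
    set r1 : ℝ := ‖w1‖ with hr1def
    set r2 : ℝ := ‖w2‖ with hr2def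
    set r3 : ℝ := ‖w3‖ with hr3def
    set R1 : ℝ := ‖v 1‖ with hR1def
    set R2 : ℝ := ‖v 2‖ with hR2def
    set R3 : ℝ := ‖v 3‖ with hR3def
    set c12 : ℝ := (inner ℝ w1 w2 : ℝ) with hc12def
    set c13 : ℝ := (inner ℝ w1 w3 : ℝ) with hc13def
    set c23 : ℝ := (inner ℝ w2 w3 : ℝ) with hc23def
    have hxx : (inner ℝ (v 0) (v 0) : ℝ) = N^2 := by
      rw [hNdef]; exact real_inner_self_eq_norm_sq _
    have h01 : (inner ℝ (v 0) (v 1) : ℝ) = N * a1 := by rw [ha1]; field_simp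
    have h02 : (inner ℝ (v 0) (v 2) : ℝ) = N * a2 := by rw [ha2]; field_simp
    have h03 : (inner ℝ (v 0) (v 3) : ℝ) = N * a3 := by rw [ha3]; field_simp
    have h10 : (inner ℝ (v 1) (v 0) : ℝ) = N * a1 := by rw [← h01]; exact real_inner_comm _ _
    have h20 : (inner ℝ (v 2) (v 0) : ℝ) = N * a2 := by rw [← h02]; exact real_inner_comm _ _
    have h30 : (inner ℝ (v 3) (v 0) : ℝ) = N * a3 := by rw [← h03]; exact real_inner_comm _ _
    have hg11 : (inner ℝ (v 1) (v 1) : ℝ) = R1^2 := by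
      rw [hR1def]; exact real_inner_self_eq_norm_sq _
    have hg22 : (inner ℝ (v 2) (v 2) : ℝ) = R2^2 := by
      rw [hR2def]; exact real_inner_self_eq_norm_sq _
    have hg33 : (inner ℝ (v 3) (v 3) : ℝ) = R3^2 := by
      rw [hR3def]; exact real_inner_self_eq_norm_sq _
    -- norm splittings
    have hR1sq : R1^2 = a1^2 + r1^2 := by
      have : r1^2 = R1^2 - a1^2 := by
        rw [hr1def, hw1, @norm_sub_sq_real, real_inner_smul_right, h10, norm_smul,
          mul_pow, Real.norm_eq_abs, sq_abs, ← hR1def, ← hNdef]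
        field_simp
        ring
      linarith
    have hR2sq : R2^2 = a2^2 + r2^2 := by
      have : r2^2 = R2^2 - a2^2 := by
        rw [hr2def, hw2, @norm_sub_sq_real, real_inner_smul_right, h20, norm_smul,
          mul_pow, Real.norm_eq_abs, sq_abs, ← hR2def, ← hNdef]
        field_simp
        ring
      linarith
    have hR3sq : R3^2 = a3^2 + r3^2 := by
      have : r3^2 = R3^2 - a3^2 := by
        rw [hr3def, hw3, @norm_sub_sq_real, real_inner_smul_right, h30, norm_smul,
          mul_pow, Real.norm_eq_abs, sq_abs, ← hR3def, ← hNdef]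
        field_simp
        ring
      linarith
    -- inner products of the v's in terms of a, c
    have h12 : (inner ℝ (v 1) (v 2) : ℝ) = a1*a2 + c12 := by
      have : c12 = (inner ℝ (v 1) (v 2) : ℝ) - a1*a2 := by
        rw [hc12def, hw1, hw2]
        simp only [inner_sub_left, inner_sub_right, real_inner_smul_left,
          real_inner_smul_right, hxx, h01, h02, h10, h20]
        field_simp
        ring
      linarith
    have h13 : (inner ℝ (v 1) (v 3) : ℝ) = a1*a3 + c13 := by
      have : c13 = (inner ℝ (v 1) (v 3) : ℝ) - a1*a3 := by
        rw [hc13def, hw1, hw3]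
        simp only [inner_sub_left, inner_sub_right, real_inner_smul_left,
          real_inner_smul_right, hxx, h01, h03, h10, h30]
        field_simp
        ring
      linarith
    have h23 : (inner ℝ (v 2) (v 3) : ℝ) = a2*a3 + c23 := by
      have : c23 = (inner ℝ (v 2) (v 3) : ℝ) - a2*a3 := by
        rw [hc23def, hw2, hw3]
        simp only [inner_sub_left, inner_sub_right, real_inner_smul_left,
          real_inner_smul_right, hxx, h02, h03, h20, h30]
        field_simp
        ring
      linarith
    -- Cauchy-Schwarz for the w's
    have hc12' : c12^2 ≤ r1^2*r2^2 := by
      have h := real_inner_mul_inner_self_le w1 w2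
      rw [real_inner_self_eq_norm_sq, real_inner_self_eq_norm_sq] at h
      rw [hc12def, hr1def, hr2def, pow_two]
      exact h
    have hc13' : c13^2 ≤ r1^2*r3^2 := by
      have h := real_inner_mul_inner_self_le w1 w3
      rw [real_inner_self_eq_norm_sq, real_inner_self_eq_norm_sq] at h
      rw [hc13def, hr1def, hr3def, pow_two]
      exact h
    have hc23' : c23^2 ≤ r2^2*r3^2 := by
      have h := real_inner_mul_inner_self_le w2 w3
      rw [real_inner_self_eq_norm_sq, real_inner_self_eq_norm_sq] at h
      rw [hc23def, hr2def, hr3def, pow_two]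
      exact h
    have hD : 0 ≤ r1^2*r2^2*r3^2 + 2*c12*c13*c23 - r1^2*c23^2 - r2^2*c13^2 - r3^2*c12^2 := by
      have h := gram3_nonneg w1 w2 w3
      rw [← hr1def, ← hr2def, ← hr3def, ← hc12def, ← hc13def, ← hc23def] at h
      linarith
    -- the A's
    set A12 : ℝ := Real.sqrt (r1^2*r2^2 - c12^2) with hA12def
    set A13 : ℝ := Real.sqrt (r1^2*r3^2 - c13^2) with hA13def
    set A23 : ℝ := Real.sqrt (r2^2*r3^2 - c23^2) with hA23def
    have hA12 : 0 ≤ A12 := Real.sqrt_nonneg _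
    have hA13 : 0 ≤ A13 := Real.sqrt_nonneg _
    have hA23 : 0 ≤ A23 := Real.sqrt_nonneg _
    have hA12sq : A12^2 = r1^2*r2^2 - c12^2 := Real.sq_sqrt (by linarith)
    have hA13sq : A13^2 = r1^2*r3^2 - c13^2 := Real.sq_sqrt (by linarith)
    have hA23sq : A23^2 = r2^2*r3^2 - c23^2 := Real.sq_sqrt (by linarith)
    -- the B's
    set B12 : ℝ := pvol v {1,2} with hB12def
    set B13 : ℝ := pvol v {1,3} with hB13def
    set B23 : ℝ := pvol v {2,3} with hB23def
    have pB12 : B12 = Real.sqrt (R1^2*R2^2 - (a1*a2+c12)^2) := by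
      rw [hB12def, pvol_pair v 1 2 (by decide), hg11, hg22, h12]
    have pB13 : B13 = Real.sqrt (R1^2*R3^2 - (a1*a3+c13)^2) := by
      rw [hB13def, pvol_pair v 1 3 (by decide), hg11, hg33, h13]
    have pB23 : B23 = Real.sqrt (R2^2*R3^2 - (a2*a3+c23)^2) := by
      rw [hB23def, pvol_pair v 2 3 (by decide), hg22, hg33, h23]
    have hB12 : 0 ≤ B12 := by rw [pB12]; exact Real.sqrt_nonneg _
    have hB13 : 0 ≤ B13 := by rw [pB13]; exact Real.sqrt_nonneg _
    have hB23 : 0 ≤ B23 := by rw [pB23]; exact Real.sqrt_nonneg _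
    have hB12sq : B12^2 = R1^2*R2^2 - (a1*a2+c12)^2 := by
      rw [pB12]
      refine Real.sq_sqrt ?_
      have hh := Bsq_inner_nonneg a1 a2 r1 r2 c12 (by rw [hr1def]; exact norm_nonneg _)
        (by rw [hr2def]; exact norm_nonneg _) hc12'
      rw [hR1sq, hR2sq]
      exact hh
    have hB13sq : B13^2 = R1^2*R3^2 - (a1*a3+c13)^2 := by
      rw [pB13]
      refine Real.sq_sqrt ?_
      have hh := Bsq_inner_nonneg a1 a3 r1 r3 c13 (by rw [hr1def]; exact norm_nonneg _)
        (by rw [hr3def]; exact norm_nonneg _) hc13'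
      rw [hR1sq, hR3sq]
      exact hh
    have hB23sq : B23^2 = R2^2*R3^2 - (a2*a3+c23)^2 := by
      rw [pB23]
      refine Real.sq_sqrt ?_
      have hh := Bsq_inner_nonneg a2 a3 r2 r3 c23 (by rw [hr2def]; exact norm_nonneg _)
        (by rw [hr3def]; exact norm_nonneg _) hc23'
      rw [hR2sq, hR3sq]
      exact hh
    -- the triple pvols
    have p012 : pvol v {0,1,2} = N * A12 := by
      rw [pvol_triple v 0 1 2 (by decide) (by decide) (by decide)]
      rw [show (inner ℝ (v 0) (v 0) : ℝ) * ((inner ℝ (v 1) (v 1) : ℝ) * (inner ℝ (v 2) (v 2) : ℝ)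
          - (inner ℝ (v 1) (v 2) : ℝ)^2)
        - (inner ℝ (v 0) (v 1) : ℝ) * ((inner ℝ (v 0) (v 1) : ℝ) * (inner ℝ (v 2) (v 2) : ℝ)
          - (inner ℝ (v 1) (v 2) : ℝ) * (inner ℝ (v 0) (v 2) : ℝ))
        + (inner ℝ (v 0) (v 2) : ℝ) * ((inner ℝ (v 0) (v 1) : ℝ) * (inner ℝ (v 1) (v 2) : ℝ)
          - (inner ℝ (v 1) (v 1) : ℝ) * (inner ℝ (v 0) (v 2) : ℝ))
          = N^2 * (r1^2*r2^2 - c12^2) by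
        rw [hxx, h01, h02, h12, hg11, hg22, hR1sq, hR2sq]; ring]
      rw [Real.sqrt_mul (sq_nonneg N), Real.sqrt_sq hN.le, hA12def]
    have p013 : pvol v {0,1,3} = N * A13 := by
      rw [pvol_triple v 0 1 3 (by decide) (by decide) (by decide)]
      rw [show (inner ℝ (v 0) (v 0) : ℝ) * ((inner ℝ (v 1) (v 1) : ℝ) * (inner ℝ (v 3) (v 3) : ℝ)
          - (inner ℝ (v 1) (v 3) : ℝ)^2)
        - (inner ℝ (v 0) (v 1) : ℝ) * ((inner ℝ (v 0) (v 1) : ℝ) * (inner ℝ (v 3) (v 3) : ℝ)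
          - (inner ℝ (v 1) (v 3) : ℝ) * (inner ℝ (v 0) (v 3) : ℝ))
        + (inner ℝ (v 0) (v 3) : ℝ) * ((inner ℝ (v 0) (v 1) : ℝ) * (inner ℝ (v 1) (v 3) : ℝ)
          - (inner ℝ (v 1) (v 1) : ℝ) * (inner ℝ (v 0) (v 3) : ℝ))
          = N^2 * (r1^2*r3^2 - c13^2) by
        rw [hxx, h01, h03, h13, hg11, hg33, hR1sq, hR3sq]; ring]
      rw [Real.sqrt_mul (sq_nonneg N), Real.sqrt_sq hN.le, hA13def]
    have p023 : pvol v {0,2,3} = N * A23 := by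
      rw [pvol_triple v 0 2 3 (by decide) (by decide) (by decide)]
      rw [show (inner ℝ (v 0) (v 0) : ℝ) * ((inner ℝ (v 2) (v 2) : ℝ) * (inner ℝ (v 3) (v 3) : ℝ)
          - (inner ℝ (v 2) (v 3) : ℝ)^2)
        - (inner ℝ (v 0) (v 2) : ℝ) * ((inner ℝ (v 0) (v 2) : ℝ) * (inner ℝ (v 3) (v 3) : ℝ)
          - (inner ℝ (v 2) (v 3) : ℝ) * (inner ℝ (v 0) (v 3) : ℝ))
        + (inner ℝ (v 0) (v 3) : ℝ) * ((inner ℝ (v 0) (v 2) : ℝ) * (inner ℝ (v 2) (v 3) : ℝ)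
          - (inner ℝ (v 2) (v 2) : ℝ) * (inner ℝ (v 0) (v 3) : ℝ))
          = N^2 * (r2^2*r3^2 - c23^2) by
        rw [hxx, h02, h03, h23, hg22, hg33, hR2sq, hR3sq]; ring]
      rw [Real.sqrt_mul (sq_nonneg N), Real.sqrt_sq hN.le, hA23def]
    -- the 0i pair pvols
    have p01 : pvol v {0,1} = N * r1 := by
      rw [pvol_pair v 0 1 (by decide), hxx, h01, hg11]
      rw [show N^2*R1^2 - (N*a1)^2 = (N*r1)^2 by rw [hR1sq]; ring]
      exact Real.sqrt_sq (by positivity)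
    have p02 : pvol v {0,2} = N * r2 := by
      rw [pvol_pair v 0 2 (by decide), hxx, h02, hg22]
      rw [show N^2*R2^2 - (N*a2)^2 = (N*r2)^2 by rw [hR2sq]; ring]
      exact Real.sqrt_sq (by positivity)
    have p03 : pvol v {0,3} = N * r3 := by
      rw [pvol_pair v 0 3 (by decide), hxx, h03, hg33]
      rw [show N^2*R3^2 - (N*a3)^2 = (N*r3)^2 by rw [hR3sq]; ring]
      exact Real.sqrt_sq (by positivity)
    rw [p012, p013, p023, p01, p02, p03]
    have hr1n : 0 ≤ r1 := by rw [hr1def]; exact norm_nonneg _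
    have hr2n : 0 ≤ r2 := by rw [hr2def]; exact norm_nonneg _
    have hr3n : 0 ≤ r3 := by rw [hr3def]; exact norm_nonneg _
    have hR1n : 0 ≤ R1 := by rw [hR1def]; exact norm_nonneg _
    have hR2n : 0 ≤ R2 := by rw [hR2def]; exact norm_nonneg _
    have hR3n : 0 ≤ R3 := by rw [hR3def]; exact norm_nonneg _
    have main := core_ineq a1 a2 a3 r1 r2 r3 c12 c13 c23 R1 R2 R3 A23 A13 A12 B23 B13 B12
      hr1n hr2n hr3n hc12' hc13' hc23' hD
      hR1n hR2n hR3n hR1sq hR2sq hR3sq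
      hA23 hA13 hA12 hA23sq hA13sq hA12sq hB23 hB13 hB12 hB23sq hB13sq hB12sq
    have main' := mul_le_mul_of_nonneg_left main hN.le
    linarith [main']
end

section
/- For any vectors v_1,...,v_d ∈ ℝ^d, ((Σ_{1≤i<j≤d} |v_i∧v_j|)/C(d,2))^(1/2) ≤ (Σ_{i=1}^d ‖v_i‖)/d. -/
lemma pvol_le_prod {d : ℕ} {ι : Type*} [DecidableEq ι]
    (v : ι → EuclideanSpace ℝ (Fin d)) (s : Finset ι) (hs : s.card = 2) :
    pvol v s ≤ ∏ i ∈ s, ‖v i‖ := by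
  classical
  have e : s ≃ Fin 2 := s.equivFinOfCardEq hs
  set a := v (e.symm 0) with ha
  set b := v (e.symm 1) with hb
  have hdet : Matrix.det (Matrix.of fun i j : s => (inner ℝ (v i) (v j) : ℝ)) =
      ‖a‖ ^ 2 * ‖b‖ ^ 2 - (inner ℝ a b : ℝ) ^ 2 := by
    rw [← Matrix.det_reindex_self e]
    rw [Matrix.det_fin_two]
    simp only [Matrix.reindex_apply, Matrix.submatrix_apply, Matrix.of_apply]
    rw [real_inner_self_eq_norm_sq, real_inner_self_eq_norm_sq,
      real_inner_comm (v (e.symm 1)) (v (e.symm 0))]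
    ring
  have hprod : ∏ i ∈ s, ‖v i‖ = ‖a‖ * ‖b‖ := by
    rw [← Finset.prod_coe_sort s (fun i => ‖v i‖),
      ← Equiv.prod_comp e.symm (fun i : s => ‖v i‖)]
    simp [Fin.prod_univ_two, ha, hb]
  rw [pvol, hdet, hprod]
  have h1 : ‖a‖ ^ 2 * ‖b‖ ^ 2 - (inner ℝ a b : ℝ) ^ 2 ≤ (‖a‖ * ‖b‖) ^ 2 := by
    nlinarith [sq_nonneg (inner ℝ a b : ℝ)]
  calc Real.sqrt (‖a‖ ^ 2 * ‖b‖ ^ 2 - (inner ℝ a b : ℝ) ^ 2)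
      ≤ Real.sqrt ((‖a‖ * ‖b‖) ^ 2) := Real.sqrt_le_sqrt h1
    _ = ‖a‖ * ‖b‖ := by
        rw [Real.sqrt_sq (by positivity)]

lemma sq_sum_eq_sum_sq_add_two_mul {ι : Type*} [DecidableEq ι] (x : ι → ℝ) (s : Finset ι) :
    (∑ i ∈ s, x i) ^ 2 =
      ∑ i ∈ s, (x i) ^ 2 + 2 * ∑ t ∈ s.powersetCard 2, ∏ i ∈ t, x i := by
  classical
  induction s using Finset.induction_on with
  | empty =>
    rw [Finset.powersetCard_eq_empty.mpr (by simp)]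
    simp
  | @insert a s ha ih =>
    have hdisj : Disjoint (s.powersetCard 2) ((s.powersetCard 1).image (insert a)) := by
      rw [Finset.disjoint_left]
      intro t ht ht'
      obtain ⟨u, hu, rfl⟩ := Finset.mem_image.mp ht'
      have htsub : insert a u ⊆ s := (Finset.mem_powersetCard.mp ht).1
      exact ha (htsub (Finset.mem_insert_self a u))
    have hinj : ∀ t ∈ s.powersetCard 1, ∀ u ∈ s.powersetCard 1,
        insert a t = insert a u → t = u := by
      intro t ht u hu h
      have hat : a ∉ t := fun h' => ha ((Finset.mem_powersetCard.mp ht).1 h')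
      have hau : a ∉ u := fun h' => ha ((Finset.mem_powersetCard.mp hu).1 h')
      rw [← Finset.erase_insert hat, ← Finset.erase_insert hau, h]
    have hpc : (insert a s).powersetCard 2 =
        s.powersetCard 2 ∪ (s.powersetCard 1).image (insert a) :=
      Finset.powersetCard_succ_insert ha 1
    rw [Finset.sum_insert ha, Finset.sum_insert ha, hpc, Finset.sum_union hdisj,
      Finset.sum_image hinj]
    have hsum1 : ∑ t ∈ s.powersetCard 1, ∏ i ∈ insert a t, x i = x a * ∑ i ∈ s, x i := by
      rw [Finset.powersetCard_one, Finset.sum_map, Finset.mul_sum]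
      refine Finset.sum_congr rfl fun i hi => ?_
      have hai : a ∉ ({i} : Finset ι) := by
        simp only [Finset.mem_singleton]
        exact fun h => ha (h ▸ hi)
      simp only [Function.Embedding.coeFn_mk]
      rw [Finset.prod_insert hai, Finset.prod_singleton]
    rw [hsum1]
    nlinarith [ih]

/-- The `k = 2`, `p = 1` vector-valued Maclaurin inequality. -/
theorem vector_maclaurin_k_eq_two (d : ℕ) (hd : 2 ≤ d) (v : Fin d → EuclideanSpace ℝ (Fin d)) :
    ((∑ s ∈ Finset.univ.powersetCard 2, pvol v s) / (d.choose 2 : ℝ)) ^ ((1 : ℝ) / 2) ≤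
      (∑ i, ‖v i‖) / d := by
  classical
  set S : ℝ := ∑ i, ‖v i‖ with hS
  have hS0 : 0 ≤ S := Finset.sum_nonneg fun i _ => norm_nonneg _
  have hd0 : (0:ℝ) < d := by positivity
  have hdR : (2:ℝ) ≤ d := by exact_mod_cast hd
  have hC0 : (0:ℝ) < (d.choose 2 : ℝ) := by
    exact_mod_cast Nat.choose_pos hd
  -- 2 * choose = d * (d-1)
  have h2C : (d.choose 2 : ℝ) * 2 = d * ((d:ℝ) - 1) := by
    have hnat : d.choose 2 * 2 = d * (d - 1) := by
      rw [Nat.choose_two_right]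
      exact Nat.div_mul_cancel (by
        rcases Nat.even_or_odd d with h | h
        · exact Dvd.dvd.mul_right h.two_dvd _
        · exact Dvd.dvd.mul_left (Nat.Odd.sub_odd h odd_one).two_dvd _)
    have := congrArg (fun n : ℕ => (n : ℝ)) hnat
    push_cast [Nat.cast_sub (by omega : 1 ≤ d)] at this
    linarith [this]
  have hQ : S ^ 2 ≤ d * ∑ i, ‖v i‖ ^ 2 := by
    simpa [hS, Finset.card_univ] using
      sq_sum_le_card_mul_sum_sq (s := (Finset.univ : Finset (Fin d)))
        (f := fun i => ‖v i‖)
  have hid := sq_sum_eq_sum_sq_add_two_mul (fun i => ‖v i‖) (Finset.univ : Finset (Fin d))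
  have hsumle : ∑ s ∈ Finset.univ.powersetCard 2, pvol v s ≤
      ∑ s ∈ Finset.univ.powersetCard 2, ∏ i ∈ s, ‖v i‖ :=
    Finset.sum_le_sum fun s hs =>
      pvol_le_prod v s (Finset.mem_powersetCard.mp hs).2
  have key : (∑ s ∈ Finset.univ.powersetCard 2, pvol v s) / (d.choose 2 : ℝ) ≤ (S / d) ^ 2 := by
    rw [div_le_iff₀ hC0]
    have h1 : ∑ s ∈ Finset.univ.powersetCard 2, pvol v s ≤
        (S ^ 2 - ∑ i, ‖v i‖ ^ 2) / 2 := by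
      rw [hS] at *
      linarith [hsumle, hid]
    have h2 : (S ^ 2 - ∑ i, ‖v i‖ ^ 2) / 2 ≤ (S / d) ^ 2 * (d.choose 2 : ℝ) := by
      rw [div_pow, div_mul_eq_mul_div, div_le_div_iff₀ two_pos (by positivity : (0:ℝ) < (d:ℝ)^2)]
      nlinarith [mul_le_mul_of_nonneg_left hQ hd0.le, h2C, sq_nonneg S, hd0]
    linarith
  have hnn : 0 ≤ (∑ s ∈ Finset.univ.powersetCard 2, pvol v s) / (d.choose 2 : ℝ) := by
    apply div_nonneg _ hC0.le
    exact Finset.sum_nonneg fun s _ => Real.sqrt_nonneg _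
  calc ((∑ s ∈ Finset.univ.powersetCard 2, pvol v s) / (d.choose 2 : ℝ)) ^ ((1:ℝ)/2)
      ≤ ((S / d) ^ 2) ^ ((1:ℝ)/2) := Real.rpow_le_rpow hnn key (by norm_num)
    _ = S / d := by
        rw [← Real.rpow_natCast (S/d) 2, ← Real.rpow_mul (by positivity)]
        norm_num
end
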